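/- arXiv:1804.10705 — 8 statements merged into one kernel-verified Lean document; each statement's English description precedes it below -/
import Mathlib

section
/- Let h : X* → ℝ ∪ {+∞} be a convex function and r > inf_{X*} h. Then {x* : (cl^{w*} h)(x*) ≤ r} equals the weak*-closure of {x* : h(x*) < r}. -/
/-!
If `p ∉ closure {h < b}`, the function equal to `⊥` on that closure and to `b` off it is a lower
semicontinuous minorant of `h`, so the hull is at least `b` at `p`. Hence a hull value `≤ r` puts
`p` in `closure {h < b}` for every `b > r`. To come down to level `r` itself, use a point `q₀`
with `h q₀ < r`: by convexity, moving from near `p` towards `q₀` lowers the level below `r`, so the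
open segment from `q₀` to `p` lies in `closure {h < r}`, and so does its endpoint `p`.
-/

open Set

/-- The weak*-lower semicontinuous hull of a function `h : X* → ℝ ∪ {+∞}` on the dual of a
locally convex space `X` (the dual being endowed with its weak* topology): the largest
weak*-lsc function below `h`. -/
noncomputable def wstarLscHull {X : Type*} [AddCommGroup X] [Module ℝ X] [TopologicalSpace X]
    (h : WeakDual ℝ X → EReal) : WeakDual ℝ X → EReal :=
  fun p => ⨆ g : {g : WeakDual ℝ X → EReal // LowerSemicontinuous g ∧ g ≤ h}, g.1 p

noncomputable def lscHull {α β : Type*} [TopologicalSpace α] [CompleteLinearOrder β]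
    (h : α → β) : α → β :=
  fun p => ⨆ g : {g : α → β // LowerSemicontinuous g ∧ g ≤ h}, g.1 p

section LscHull

variable {α β : Type*} [TopologicalSpace α] [CompleteLinearOrder β] {h : α → β}

theorem lscHull_le : lscHull h ≤ h := fun p => iSup_le fun g => g.2.2 p

theorem le_lscHull {g : α → β} (hg : LowerSemicontinuous g) (hgh : g ≤ h) : g ≤ lscHull h :=
  fun p => le_iSup (fun g : {g : α → β // LowerSemicontinuous g ∧ g ≤ h} => g.1 p) ⟨g, hg, hgh⟩

theorem lowerSemicontinuous_lscHull : LowerSemicontinuous (lscHull h) :=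
  lowerSemicontinuous_iSup fun g => g.2.1

theorem closure_setOf_lt_subset_setOf_lscHull_le (r : β) :
    closure {p | h p < r} ⊆ {p | lscHull h p ≤ r} :=
  closure_minimal (fun _ hp => ((lscHull_le _).trans_lt hp).le)
    (lowerSemicontinuous_lscHull.isClosed_preimage r)

open scoped Classical in
theorem IsClosed.lowerSemicontinuous_ite_bot {C : Set α} (hC : IsClosed C) (b : β) :
    LowerSemicontinuous fun q => if q ∈ C then ⊥ else b := by
  intro x y hy
  have hx : x ∉ C := fun hx => by simp [hx] at hy
  filter_upwards [hC.isOpen_compl.mem_nhds hx] with q hq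
  simpa only [if_neg hq, if_neg hx] using hy

open scoped Classical in
theorem mem_closure_setOf_lt_of_lscHull_lt {p : α} {b : β} (hp : lscHull h p < b) :
    p ∈ closure {q | h q < b} := by
  by_contra hnot
  have hminorant : (fun q => if q ∈ closure {q | h q < b} then ⊥ else b) ≤ h := by
    intro q
    dsimp only
    split_ifs with hq
    · exact bot_le
    · exact not_lt.mp fun hlt => hq (subset_closure hlt)
  have := le_lscHull (isClosed_closure.lowerSemicontinuous_ite_bot b) hminorant p
  rw [if_neg hnot] at this
  exact this.not_gt hp

end LscHull

theorem wstarLscHull_eq_lscHull {X : Type*} [AddCommGroup X] [Module ℝ X] [TopologicalSpace X]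
    (h : WeakDual ℝ X → EReal) : wstarLscHull h = lscHull h :=
  rfl

section ConvexEpigraph

variable {E : Type*} [AddCommGroup E] [Module ℝ E] [TopologicalSpace E] [ContinuousAdd E]
  [ContinuousSMul ℝ E] {h : E → EReal}

theorem mem_closure_setOf_lt_of_convex_epigraph
    (hconv : Convex ℝ {p : E × ℝ | h p.1 ≤ (p.2 : EReal)}) {q₀ p : E} {r : ℝ}
    (hq₀ : h q₀ < r) (hp : ∀ b : ℝ, r < b → p ∈ closure {q | h q < b}) :
    p ∈ closure {q | h q < r} := by
  obtain ⟨s₀, hq₀s₀, hs₀r⟩ := EReal.exists_between_coe_real hq₀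
  rw [EReal.coe_lt_coe_iff] at hs₀r
  suffices openSegment ℝ q₀ p ⊆ closure {q | h q < r} by
    simpa only [closure_closure] using
      closure_mono this (segment_subset_closure_openSegment (right_mem_segment ℝ q₀ p))
  rintro _ ⟨a, b, ha, hb, hab, rfl⟩
  obtain rfl : b = 1 - a := by linarith
  -- `a * s₀ + (1 - a) * (r + a * (r - s₀)) = r - a ^ 2 * (r - s₀) < r`
  refine map_mem_closure (f := fun y => a • q₀ + (1 - a) • y) (by fun_prop)
    (hp _ (lt_add_of_pos_right r (mul_pos ha (sub_pos.2 hs₀r)))) fun y hy => ?_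
  obtain ⟨c, hyc, hcb⟩ := EReal.exists_between_coe_real hy
  rw [EReal.coe_lt_coe_iff] at hcb
  have hcombo : h (a • q₀ + (1 - a) • y) ≤ ↑(a * s₀ + (1 - a) * c) := by
    simpa using hconv (x := (q₀, s₀)) (y := (y, c)) hq₀s₀.le hyc.le ha.le hb.le hab
  refine hcombo.trans_lt (EReal.coe_lt_coe_iff.mpr ?_)
  nlinarith [mul_lt_mul_of_pos_left hcb hb, mul_pos (mul_pos ha ha) (sub_pos.2 hs₀r)]

end ConvexEpigraph

theorem sublevel_of_wstarLscHull_eq_closure_general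
    {X : Type*} [AddCommGroup X] [Module ℝ X] [TopologicalSpace X]
    (h : WeakDual ℝ X → EReal)
    (hconv : Convex ℝ {p : WeakDual ℝ X × ℝ | h p.1 ≤ (p.2 : EReal)})
    (r : ℝ) (hr : (⨅ p : WeakDual ℝ X, h p) < (r : EReal)) :
    {p : WeakDual ℝ X | wstarLscHull h p ≤ (r : EReal)} =
      closure {p : WeakDual ℝ X | h p < (r : EReal)} := by
  rw [wstarLscHull_eq_lscHull]
  refine Subset.antisymm (fun p hp => ?_) (closure_setOf_lt_subset_setOf_lscHull_le _)
  obtain ⟨q₀, hq₀⟩ := iInf_lt_iff.mp hr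
  exact mem_closure_setOf_lt_of_convex_epigraph hconv hq₀ fun b hb =>
    mem_closure_setOf_lt_of_lscHull_lt (hp.trans_lt (EReal.coe_lt_coe_iff.mpr hb))

/-- For a convex function `h : X* → ℝ ∪ {+∞}` and a real `r` with `r > inf_{X*} h`, the
sublevel set `{x* : (cl^{w*} h)(x*) ≤ r}` equals the weak*-closure of `{x* : h(x*) < r}`. -/
theorem sublevel_of_wstarLscHull_eq_closure
    {X : Type*} [AddCommGroup X] [Module ℝ X] [TopologicalSpace X]
    [IsTopologicalAddGroup X] [ContinuousSMul ℝ X] [LocallyConvexSpace ℝ X]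
    (h : WeakDual ℝ X → EReal)
    (hconv : Convex ℝ {p : WeakDual ℝ X × ℝ | h p.1 ≤ (p.2 : EReal)})
    (r : ℝ) (hr : (⨅ p : WeakDual ℝ X, h p) < (r : EReal)) :
    {p : WeakDual ℝ X | wstarLscHull h p ≤ (r : EReal)} =
      closure {p : WeakDual ℝ X | h p < (r : EReal)} :=
  sublevel_of_wstarLscHull_eq_closure_general h hconv r hr
end

section
/- Let X = ℓ², let (e_n) be the canonical basis, and define f_n : ℓ² → ℝ by f_n(x) = 2ⁿ ⟨e_n, x⟩². Then the function I_f(x) = Σ_{n} 2^{-n} f_n(x) = ‖x‖² is Fréchet differentiable with ∇I_f(x) = 2x, each f_n is differentiable with ∇f_n(x) = 2ⁿ⁺¹ ⟨x, e_n⟩ e_n, and there exists x ∈ ℓ² (for instance x = (1/n)_{n≥1}) such that Σ_n 2^{-n} ‖∇f_n(x)‖ = 2 Σ_n |⟨x, e_n⟩| = +∞. -/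
/-!
The weight `2^{-n}` cancels the factor `2ⁿ` in `f_n`, so `I_f(x) = Σ xₙ² = ‖x‖²`, which is
smooth. The gradients of the `f_n`, however, have norm `2^{n+1} |xₙ|`, so the weighted series of
their norms is `2 Σ |xₙ|`, which diverges for any `x ∈ ℓ² \ ℓ¹`, e.g. `xₙ = 1/n`.
-/

open scoped RealInnerProductSpace
noncomputable section

/-- The Hilbert space `ℓ²` of square-summable real sequences. -/
abbrev ellTwo : Type := lp (fun _ : ℕ => ℝ) 2

/-- The canonical orthonormal basis of `ℓ²`. -/
def e (n : ℕ) : ellTwo := lp.single 2 n (1 : ℝ)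

/-- The integrand `f_n(x) = 2ⁿ ⟨e_n, x⟩²`. -/
def fn (n : ℕ) (x : ellTwo) : ℝ := (2 : ℝ) ^ n * ⟪e n, x⟫ ^ 2

/-- The integral function `I_f(x) = Σ_n 2^{-n} f_n(x)` (integral w.r.t. the measure
`μ({n}) = 2^{-n}` on `ℕ`). -/
def If (x : ellTwo) : ℝ := ∑' n : ℕ, (2 : ℝ) ^ (-(n : ℤ)) * fn n x

lemma zpow_neg_natCast_mul_pow_add {G₀ : Type*} [GroupWithZero G₀] {a : G₀} (ha : a ≠ 0)
    (n k : ℕ) : a ^ (-(n : ℤ)) * a ^ (n + k) = a ^ k := by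
  rw [pow_add, ← mul_assoc, ← zpow_natCast a n, zpow_neg_mul_zpow_self _ ha, one_mul]

lemma inner_e_left (n : ℕ) (x : ellTwo) : ⟪e n, x⟫ = x n := by
  simpa [e] using lp.inner_single_left (𝕜 := ℝ) n (1 : ℝ) x

lemma norm_e (n : ℕ) : ‖e n‖ = 1 := by
  simp [e, lp.norm_single]

lemma If_eq_norm_sq (x : ellTwo) : If x = ‖x‖ ^ 2 := by
  have hterm (n : ℕ) : (2 : ℝ) ^ (-(n : ℤ)) * fn n x = x n * x n := by
    rw [fn, inner_e_left, ← mul_assoc, ← zpow_natCast, zpow_neg_mul_zpow_self _ two_ne_zero,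
      one_mul, sq]
  rw [If, tsum_congr hterm, ← real_inner_self_eq_norm_sq, lp.inner_eq_tsum]
  rfl

lemma hasFDerivAt_If (x : ellTwo) : HasFDerivAt If ((2 : ℝ) • innerSL ℝ x) x := by
  rw [funext If_eq_norm_sq]
  exact (hasStrictFDerivAt_norm_sq x).hasFDerivAt.congr_fderiv (ofNat_smul_eq_nsmul ℝ 2 _).symm

lemma hasFDerivAt_fn (n : ℕ) (x : ellTwo) :
    HasFDerivAt (fn n) (innerSL ℝ (((2 : ℝ) ^ (n + 1) * ⟪x, e n⟫) • e n)) x := by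
  have hcoord : HasFDerivAt (fun y : ellTwo => ⟪e n, y⟫) (innerSL ℝ (e n)) x :=
    (innerSL ℝ (e n)).hasFDerivAt
  refine ((hcoord.pow 2).const_mul ((2 : ℝ) ^ n)).congr_fderiv ?_
  ext y
  simp only [smul_apply, innerSL_apply_apply, real_inner_smul_left,
    real_inner_comm x, smul_eq_mul, nsmul_eq_mul]
  ring

lemma weighted_norm_grad_fn_eq (x : ellTwo) (n : ℕ) :
    (2 : ℝ) ^ (-(n : ℤ)) * ‖((2 : ℝ) ^ (n + 1) * ⟪x, e n⟫) • e n‖ = 2 * |x n| := by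
  rw [norm_smul, norm_e, mul_one, norm_mul, real_inner_comm, inner_e_left, Real.norm_eq_abs,
    Real.norm_eq_abs, abs_of_pos (by positivity), ← mul_assoc,
    zpow_neg_natCast_mul_pow_add (two_ne_zero' ℝ), pow_one]

lemma exists_ellTwo_not_summable_abs : ∃ x : ellTwo, ¬ Summable fun n => |x n| := by
  have hmem : Memℓp (fun n : ℕ => 1 / (n : ℝ)) 2 := by
    rw [memℓp_gen_iff (by norm_num)]
    refine (Real.summable_one_div_nat_pow.mpr one_lt_two).congr fun n => ?_
    simp
  refine ⟨⟨_, hmem⟩, ?_⟩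
  simpa using Real.not_summable_one_div_natCast

/-- `I_f(x) = ‖x‖²` is Fréchet differentiable with `∇I_f(x) = 2x`, each `f_n` is
differentiable with `∇f_n(x) = 2ⁿ⁺¹⟨x,e_n⟩ e_n`, and yet there is `x ∈ ℓ²` (e.g.
`x = (1/n)_n`) for which `Σ_n 2^{-n} ‖∇f_n(x)‖ = 2 Σ_n |⟨x,e_n⟩| = +∞`, i.e. the series of
norms of the subgradients is not summable. -/
theorem If_eq_norm_sq_hasFDeriv_and_not_summable :
    (∀ x : ellTwo, If x = ‖x‖ ^ 2) ∧
    (∀ x : ellTwo, HasFDerivAt If ((2 : ℝ) • (innerSL ℝ x)) x) ∧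
    (∀ (n : ℕ) (x : ellTwo),
      HasFDerivAt (fn n) (innerSL ℝ (((2 : ℝ) ^ (n + 1) * ⟪x, e n⟫) • e n)) x) ∧
    (∃ x : ellTwo,
      ¬ Summable (fun n : ℕ =>
        (2 : ℝ) ^ (-(n : ℤ)) * ‖((2 : ℝ) ^ (n + 1) * ⟪x, e n⟫) • e n‖)) := by
  refine ⟨If_eq_norm_sq, hasFDerivAt_If, hasFDerivAt_fn, ?_⟩
  obtain ⟨x, hx⟩ := exists_ellTwo_not_summable_abs
  refine ⟨x, ?_⟩
  simpa only [weighted_norm_grad_fn_eq, summable_mul_left_iff (two_ne_zero' ℝ)] using hx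
end
end

section
/- Let (T,Σ,μ) be a σ-finite measure space, f : T × X → ℝ ∪ {+∞} a convex normal integrand with f_t := f(t,·). Fix x ∈ X, ε₁, ε₂ ≥ 0 with ε = ε₁ + ε₂, ℓ ∈ L¹(T,ℝ₊) with ∫ ℓ dμ ≤ ε₁, a weak*-integrable selection x* : T → X* with x*(t) ∈ ∂_{ℓ(t)} f_t(x) a.e. whose weak integral ∫_T x* dμ belongs to X*, and λ* ∈ N^{ε₂}_{dom I_f}(x). Then ∫_T x* dμ + λ* ∈ ∂_ε I_f(x), where I_f(x) = ∫_T f(t,x) dμ(t). -/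
/- If `x*(t)` is an `ℓ(t)`-subgradient of `f_t` at `x`, then pointwise
`f_t(x) ≤ f_t(y) + ℓ(t) - ⟨x*(t), y - x⟩`. Adding an integrable `k` to the
integrand raises the upper integral by at most `∫ k` (shift every majorant by `k`), so
`I_f(x) ≤ I_f(y) + ∫ ℓ - ⟨∫ x*, y - x⟩`. Where `I_f(y) < ∞`, the normal vector `λ*`
contributes at most `ε₂`, and `∫ ℓ ≤ ε₁`. -/

open MeasureTheory Set
noncomputable section

/-- The upper integral `∫_T φ dμ := inf { ∫ g dμ : g ∈ L¹(T,ℝ), φ ≤ g a.e. }` of an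
extended-real-valued function, equal to `+∞` when no integrable majorant exists. -/
noncomputable def upperIntegral {T : Type*} [MeasurableSpace T] (μ : Measure T)
    (φ : T → EReal) : EReal :=
  sInf {r : EReal | ∃ g : T → ℝ, Integrable g μ ∧
    (∀ᵐ t ∂μ, φ t ≤ (g t : EReal)) ∧ r = ((∫ t, g t ∂μ : ℝ) : EReal)}

namespace EReal

lemma le_add_coe_of_coe_le_sub_add {a b : EReal} {c d : ℝ} (h : (c : EReal) ≤ b - a + d) :
    a ≤ b + ((d - c : ℝ) : EReal) := by
  induction a using EReal.rec with
  | bot => exact bot_le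
  | top => simp [sub_top] at h
  | coe a =>
    induction b using EReal.rec with
    | bot => simp at h
    | top => rw [top_add_coe]; exact le_top
    | coe b =>
      norm_cast at h ⊢
      linarith

end EReal

section UpperIntegral

variable {T : Type*} [MeasurableSpace T] {μ : Measure T} {φ ψ : T → EReal}

lemma upperIntegral_le_integral {g : T → ℝ} (hg : Integrable g μ)
    (hφg : ∀ᵐ t ∂μ, φ t ≤ g t) : upperIntegral μ φ ≤ ((∫ t, g t ∂μ : ℝ) : EReal) :=
  sInf_le ⟨g, hg, hφg, rfl⟩

lemma le_upperIntegral {c : EReal}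
    (h : ∀ g : T → ℝ, Integrable g μ → (∀ᵐ t ∂μ, φ t ≤ g t) → c ≤ ((∫ t, g t ∂μ : ℝ) : EReal)) :
    c ≤ upperIntegral μ φ :=
  le_sInf fun _ ⟨g, hg, hφg, hc⟩ => hc ▸ h g hg hφg

lemma upperIntegral_le_upperIntegral_add_integral {k : T → ℝ} (hk : Integrable k μ)
    (hφψ : ∀ᵐ t ∂μ, φ t ≤ ψ t + k t) :
    upperIntegral μ φ ≤ upperIntegral μ ψ + ((∫ t, k t ∂μ : ℝ) : EReal) := by
  rw [← EReal.sub_le_iff_le_add (.inl (EReal.coe_ne_bot _)) (.inl (EReal.coe_ne_top _))]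
  refine le_upperIntegral fun g hg hψg => ?_
  rw [EReal.sub_le_iff_le_add (.inl (EReal.coe_ne_bot _)) (.inl (EReal.coe_ne_top _)),
    ← EReal.coe_add, ← integral_add hg hk]
  refine upperIntegral_le_integral (hg.add hk) ?_
  filter_upwards [hφψ, hψg] with t hφψt hψgt
  exact hφψt.trans (by rw [EReal.coe_add]; gcongr)

end UpperIntegral

theorem weakIntegral_selection_add_normal_mem_epsSubdiff_general
    {X : Type*} [AddCommGroup X] [Module ℝ X] [TopologicalSpace X]
    {T : Type*} [MeasurableSpace T] (μ : Measure T)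
    (f : T → X → EReal)
    (x : X) (ε ε₁ ε₂ : ℝ) (hε : ε = ε₁ + ε₂)
    (ℓ : T → ℝ) (hℓint : Integrable ℓ μ)
    (hℓε : ∫ t, ℓ t ∂μ ≤ ε₁)
    (xs : T → WeakDual ℝ X)
    -- `xs` is weak*-integrable and its weak integral is represented by `I ∈ X*`:
    (hxsint : ∀ y : X, Integrable (fun t => xs t y) μ)
    (I : WeakDual ℝ X) (hI : ∀ y : X, I y = ∫ t, xs t y ∂μ)
    -- `xs t ∈ ∂_{ℓ t} f_t(x)` a.e.:
    (hsel : ∀ᵐ t ∂μ, ∀ y : X,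
      ((xs t y - xs t x : ℝ) : EReal) ≤ f t y - f t x + ((ℓ t : ℝ) : EReal))
    -- `λ* ∈ N^{ε₂}_{dom I_f}(x)`:
    (lam : WeakDual ℝ X)
    (hlam : ∀ y : X, upperIntegral μ (fun t => f t y) ≠ ⊤ → lam y - lam x ≤ ε₂)
    -- `I_f(x)` is finite:
    (hfinx : ∃ r : ℝ, upperIntegral μ (fun t => f t x) = (r : EReal)) :
    -- conclusion : `I + λ* ∈ ∂_ε I_f(x)`
    ∀ y : X, (((I + lam) y - (I + lam) x : ℝ) : EReal) ≤
      upperIntegral μ (fun t => f t y) - upperIntegral μ (fun t => f t x) + (ε : EReal) := by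
  intro y
  obtain ⟨r, hr⟩ := hfinx
  have hxs_sub : Integrable (fun t => xs t y - xs t x) μ := (hxsint y).sub (hxsint x)
  have hpointwise : ∀ᵐ t ∂μ, f t x ≤ f t y + ((ℓ t - (xs t y - xs t x) : ℝ) : EReal) := by
    filter_upwards [hsel] with t hsel_t using EReal.le_add_coe_of_coe_le_sub_add (hsel_t y)
  have hIfx := upperIntegral_le_upperIntegral_add_integral
    (k := fun t => ℓ t - (xs t y - xs t x)) (hℓint.sub hxs_sub) hpointwise
  rw [integral_sub hℓint hxs_sub, integral_sub (hxsint y) (hxsint x), ← hI, ← hI, hr] at hIfx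
  have hnormal := hlam y
  rw [hr]
  generalize upperIntegral μ (fun t => f t y) = Ify at hnormal hIfx ⊢
  induction Ify using EReal.rec with
  | bot => simp at hIfx
  | top => rw [EReal.top_sub_coe, EReal.top_add_coe]; exact le_top
  | coe s =>
    replace hnormal := hnormal (EReal.coe_ne_top s)
    change ((I y + lam y - (I x + lam x) : ℝ) : EReal) ≤ s - r + ε
    norm_cast at hIfx ⊢
    linarith

/-- Easy inclusion in the ε-subdifferential formula for convex integral functions: if
`x*(·)` is a weak*-integrable selection of `∂_{ℓ(t)} f_t(x)` whose weak integral is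
represented by `I ∈ X*`, `∫ ℓ dμ ≤ ε₁`, and `λ* ∈ N^{ε₂}_{dom I_f}(x)`, then
`I + λ* ∈ ∂_ε I_f(x)` with `ε = ε₁ + ε₂`. -/
theorem weakIntegral_selection_add_normal_mem_epsSubdiff
    {X : Type*} [AddCommGroup X] [Module ℝ X] [TopologicalSpace X]
    [IsTopologicalAddGroup X] [ContinuousSMul ℝ X] [LocallyConvexSpace ℝ X]
    {T : Type*} [MeasurableSpace T] (μ : Measure T) [SigmaFinite μ]
    (f : T → X → EReal)
    -- `f` is a convex normal integrand:
    (hlsc : ∀ᵐ t ∂μ, LowerSemicontinuous (f t))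
    (hconv : ∀ᵐ t ∂μ, Convex ℝ {p : X × ℝ | f t p.1 ≤ (p.2 : EReal)})
    (hproper : ∀ᵐ t ∂μ, (∀ y, f t y ≠ ⊥) ∧ (∃ y, f t y ≠ ⊤))
    (x : X) (ε ε₁ ε₂ : ℝ) (hε₁ : 0 ≤ ε₁) (hε₂ : 0 ≤ ε₂) (hε : ε = ε₁ + ε₂)
    (ℓ : T → ℝ) (hℓint : Integrable ℓ μ) (hℓ0 : ∀ᵐ t ∂μ, 0 ≤ ℓ t)
    (hℓε : ∫ t, ℓ t ∂μ ≤ ε₁)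
    (xs : T → WeakDual ℝ X)
    -- `xs` is weak*-integrable and its weak integral is represented by `I ∈ X*`:
    (hxsint : ∀ y : X, Integrable (fun t => xs t y) μ)
    (I : WeakDual ℝ X) (hI : ∀ y : X, I y = ∫ t, xs t y ∂μ)
    -- `xs t ∈ ∂_{ℓ t} f_t(x)` a.e.:
    (hsel : ∀ᵐ t ∂μ, ∀ y : X,
      ((xs t y - xs t x : ℝ) : EReal) ≤ f t y - f t x + ((ℓ t : ℝ) : EReal))
    -- `λ* ∈ N^{ε₂}_{dom I_f}(x)`:
    (lam : WeakDual ℝ X)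
    (hlam : ∀ y : X, upperIntegral μ (fun t => f t y) ≠ ⊤ → lam y - lam x ≤ ε₂)
    -- `I_f(x)` is finite:
    (hfinx : ∃ r : ℝ, upperIntegral μ (fun t => f t x) = (r : EReal)) :
    -- conclusion : `I + λ* ∈ ∂_ε I_f(x)`
    ∀ y : X, (((I + lam) y - (I + lam) x : ℝ) : EReal) ≤
      upperIntegral μ (fun t => f t y) - upperIntegral μ (fun t => f t x) + (ε : EReal) :=
  weakIntegral_selection_add_normal_mem_epsSubdiff_general μ f x ε ε₁ ε₂ hε ℓ hℓint hℓε xs hxsint I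
    hI hsel lam hlam hfinx
end
end

section
/- Let (T,Σ,μ) be a σ-finite measure space and f : T × X → ℝ ∪ {+∞} an integrand such that each f_t is Lipschitz with constant K(t), K ∈ L¹(T,ℝ₊), on a ball B(x,δ), and t ↦ f(t,y) is integrable for each y ∈ B(x,δ). Then I_f(y) = ∫_T f(t,y)dμ is Lipschitz on B(x,δ) with constant ∫_T K dμ, and for every u ∈ X, I_f°(x;u) ≤ ∫_T f_t°(x;u) dμ(t). -/
open Filter Topology MeasureTheory
noncomputable section

/-- The Clarke generalized directional derivative
`φ°(x;u) = limsup_{y→x, s↓0} (φ(y+su) − φ(y))/s`. -/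
noncomputable def clarkeDeriv {X : Type*} [NormedAddCommGroup X] [NormedSpace ℝ X]
    (φ : X → ℝ) (x u : X) : ℝ :=
  Filter.limsup (fun p : X × ℝ => (φ (p.1 + p.2 • u) - φ p.1) / p.2)
    ((𝓝 x) ×ˢ (𝓝[>] (0 : ℝ)))

/-!
For `y, z` in the ball, `‖∫ (f t y - f t z)‖ ≤ ∫ K t * ‖y - z‖`. For the Clarke derivative,
the difference quotients of `y ↦ ∫ f t y` are the integrals of the difference quotients of the
`f t`, which are dominated by `K t * ‖u‖` as long as both `y` and `y + s • u` lie in the ball.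
Restricting the limsup filter to such pairs `(y, s)` makes this domination uniform, and the
reverse Fatou lemma bounds the limsup of the integrals by the integral of the limsups.
-/

open scoped NNReal ENNReal

theorem ENNReal.liminf_ofReal_sub {ι : Type*} {F : Filter ι} [F.NeBot] {v : ι → ℝ} {C : ℝ}
    (hv : ∀ i, |v i| ≤ C) (c : ℝ) :
    liminf (fun i => ENNReal.ofReal (c - v i)) F = ENNReal.ofReal (c - limsup v F) := by
  have hanti : Antitone fun a : ℝ => ENNReal.ofReal (c - a) :=
    fun a b hab => ENNReal.ofReal_le_ofReal (by linarith)
  have hcont : Continuous fun a : ℝ => ENNReal.ofReal (c - a) :=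
    ENNReal.continuous_ofReal.comp (continuous_const.sub continuous_id)
  have hbdd_above : F.IsBoundedUnder (· ≤ ·) v :=
    isBoundedUnder_of_eventually_le (a := C) (.of_forall fun i => le_of_abs_le (hv i))
  have hbdd_below : F.IsBoundedUnder (· ≥ ·) v :=
    isBoundedUnder_of_eventually_ge (a := -C) (.of_forall fun i => neg_le_of_abs_le (hv i))
  exact (hanti.map_limsup_of_continuousAt v hcont.continuousAt hbdd_above
    hbdd_below.isCoboundedUnder_le).symm

theorem Filter.limsup_comap_subtype_val {α β : Type*} [ConditionallyCompleteLattice β]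
    {F : Filter α} {s : Set α} (hs : s ∈ F) (v : α → β) :
    limsup (fun i : s => v i) (comap (↑) F) = limsup v F := by
  rw [← Function.comp_def, limsup_comp, map_comap_of_mem (by simpa using hs)]

section Integral

variable {T : Type*} [MeasurableSpace T] {μ : Measure T}

theorem MeasureTheory.ofReal_integral_le_lintegral_ofReal {f : T → ℝ} (hf : Integrable f μ) :
    ENNReal.ofReal (∫ t, f t ∂μ) ≤ ∫⁻ t, ENNReal.ofReal (f t) ∂μ :=
  calc ENNReal.ofReal (∫ t, f t ∂μ)
      ≤ ENNReal.ofReal (∫ t, max (f t) 0 ∂μ) :=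
        ENNReal.ofReal_le_ofReal (integral_mono hf hf.pos_part fun t => le_max_left _ _)
    _ = ∫⁻ t, ENNReal.ofReal (max (f t) 0) ∂μ :=
        ofReal_integral_eq_lintegral_ofReal hf.pos_part (ae_of_all _ fun t => le_max_right _ _)
    _ = ∫⁻ t, ENNReal.ofReal (f t) ∂μ := by simp

theorem limsup_integral_le_integral_of_ae_limsup_le {ι : Type*} {F : Filter ι} [F.NeBot]
    [F.IsCountablyGenerated] {q : ι → T → ℝ} {g φ : T → ℝ} (hq : ∀ i, Integrable (q i) μ)
    (hg : Integrable g μ) (hqg : ∀ᵐ t ∂μ, ∀ i, |q i t| ≤ g t) (hφ : Integrable φ μ)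
    (hqφ : ∀ᵐ t ∂μ, limsup (fun i => q i t) F ≤ φ t) :
    limsup (fun i => ∫ t, q i t ∂μ) F ≤ ∫ t, φ t ∂μ := by
  have hint_abs : ∀ i, |∫ t, q i t ∂μ| ≤ ∫ t, g t ∂μ := fun i =>
    (abs_integral_le_integral_abs).trans
      (integral_mono_ae (hq i).abs hg (hqg.mono fun t ht => ht i))
  have hsub_nonneg : ∀ i, 0 ≤ᵐ[μ] fun t => g t - q i t := fun i =>
    hqg.mono fun t ht => sub_nonneg.2 (le_of_abs_le (ht i))
  -- Fatou's lemma for the nonnegative functions `g - q i`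
  have hfatou : ENNReal.ofReal (∫ t, g t ∂μ - ∫ t, φ t ∂μ)
      ≤ ENNReal.ofReal (∫ t, g t ∂μ - limsup (fun i => ∫ t, q i t ∂μ) F) :=
    calc ENNReal.ofReal (∫ t, g t ∂μ - ∫ t, φ t ∂μ)
        ≤ ∫⁻ t, ENNReal.ofReal (g t - φ t) ∂μ := by
          rw [← integral_sub hg hφ]; exact ofReal_integral_le_lintegral_ofReal (hg.sub hφ)
      _ ≤ ∫⁻ t, liminf (fun i => ENNReal.ofReal (g t - q i t)) F ∂μ := by
          refine lintegral_mono_ae ?_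
          filter_upwards [hqg, hqφ] with t hbound hlimsup
          rw [ENNReal.liminf_ofReal_sub hbound]
          exact ENNReal.ofReal_le_ofReal (by linarith)
      _ ≤ liminf (fun i => ∫⁻ t, ENNReal.ofReal (g t - q i t) ∂μ) F :=
          lintegral_liminf_le' fun i => (hg.sub (hq i)).aemeasurable.ennreal_ofReal
      _ = liminf (fun i => ENNReal.ofReal (∫ t, g t ∂μ - ∫ t, q i t ∂μ)) F := by
          congr 1; funext i
          rw [← integral_sub hg (hq i)]
          exact (ofReal_integral_eq_lintegral_ofReal (hg.sub (hq i)) (hsub_nonneg i)).symm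
      _ = ENNReal.ofReal (∫ t, g t ∂μ - limsup (fun i => ∫ t, q i t ∂μ) F) :=
          ENNReal.liminf_ofReal_sub hint_abs _
  have hlimsup_le : limsup (fun i => ∫ t, q i t ∂μ) F ≤ ∫ t, g t ∂μ :=
    limsup_le_of_le (isBoundedUnder_of_eventually_ge (a := -∫ t, g t ∂μ)
      (.of_forall fun i => neg_le_of_abs_le (hint_abs i))).isCoboundedUnder_le
      (.of_forall fun i => le_of_abs_le (hint_abs i))
  have := (ENNReal.ofReal_le_ofReal_iff (sub_nonneg.2 hlimsup_le)).1 hfatou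
  linarith

theorem lipschitzOnWith_integral {X E : Type*} [PseudoMetricSpace X] [NormedAddCommGroup E]
    [NormedSpace ℝ E] {f : T → X → E} {s : Set X} {K : T → ℝ≥0}
    (hK : Integrable (fun t => (K t : ℝ)) μ) (hlip : ∀ᵐ t ∂μ, LipschitzOnWith (K t) (f t) s)
    (hint : ∀ y ∈ s, Integrable (fun t => f t y) μ) :
    LipschitzOnWith (∫ t, (K t : ℝ) ∂μ).toNNReal (fun y => ∫ t, f t y ∂μ) s := by
  have hK_nonneg : 0 ≤ ∫ t, (K t : ℝ) ∂μ := integral_nonneg fun t => (K t).2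
  refine LipschitzOnWith.of_dist_le_mul fun y hy z hz => ?_
  rw [Real.coe_toNNReal _ hK_nonneg, dist_eq_norm,
    ← integral_sub (hint y hy) (hint z hz), ← integral_mul_const]
  refine norm_integral_le_of_norm_le (hK.mul_const _) ?_
  filter_upwards [hlip] with t ht
  rw [← dist_eq_norm]
  exact ht.dist_le_mul y hy z hz

end Integral

section ClarkeDerivative

variable {X : Type*} [NormedAddCommGroup X] [NormedSpace ℝ X]

def diffQuot (φ : X → ℝ) (u : X) (p : X × ℝ) : ℝ :=
  (φ (p.1 + p.2 • u) - φ p.1) / p.2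

theorem clarkeDeriv_eq_limsup_diffQuot (φ : X → ℝ) (x u : X) :
    clarkeDeriv φ x u = limsup (diffQuot φ u) (𝓝 x ×ˢ 𝓝[>] 0) :=
  rfl

def diffQuotDomain (s : Set X) (u : X) : Set (X × ℝ) :=
  {p | p.1 ∈ s ∧ p.1 + p.2 • u ∈ s ∧ 0 < p.2}

theorem diffQuotDomain_mem_nhds_prod_nhdsGT {s : Set X} {x : X} (hs : s ∈ 𝓝 x) (u : X) :
    diffQuotDomain s u ∈ 𝓝 x ×ˢ 𝓝[>] 0 := by
  have hendpoint : Tendsto (fun p : X × ℝ => p.1 + p.2 • u) (𝓝 x ×ˢ 𝓝[>] 0) (𝓝 x) := by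
    have hcont : Continuous fun p : X × ℝ => p.1 + p.2 • u := by fun_prop
    simpa using (hcont.tendsto (x, 0)).mono_left
      (nhds_prod_eq (x := x) (y := (0 : ℝ)) ▸ prod_mono le_rfl nhdsWithin_le_nhds)
  filter_upwards [prod_mem_prod hs self_mem_nhdsWithin, hendpoint hs] with p hp hp'
  exact ⟨hp.1, hp', hp.2⟩

theorem LipschitzOnWith.abs_diffQuot_le {φ : X → ℝ} {k : ℝ≥0} {s : Set X}
    (hφ : LipschitzOnWith k φ s) {u : X} {p : X × ℝ} (hp : p ∈ diffQuotDomain s u) :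
    |diffQuot φ u p| ≤ k * ‖u‖ := by
  obtain ⟨hp₁, hp₂, hpos⟩ := hp
  have hdist : dist (φ (p.1 + p.2 • u)) (φ p.1) ≤ k * (p.2 * ‖u‖) := by
    simpa [dist_eq_norm, norm_smul, abs_of_pos hpos] using hφ.dist_le_mul _ hp₂ _ hp₁
  rw [diffQuot, abs_div, abs_of_pos hpos, div_le_iff₀ hpos, ← Real.dist_eq]
  linarith

theorem LipschitzOnWith.abs_clarkeDeriv_le {φ : X → ℝ} {k : ℝ≥0} {s : Set X} {x : X}
    (hφ : LipschitzOnWith k φ s) (hs : s ∈ 𝓝 x) (u : X) :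
    |clarkeDeriv φ x u| ≤ k * ‖u‖ := by
  have hbound : ∀ᶠ p in 𝓝 x ×ˢ 𝓝[>] 0, |diffQuot φ u p| ≤ k * ‖u‖ :=
    mem_of_superset (diffQuotDomain_mem_nhds_prod_nhdsGT hs u) fun _ hp =>
      hφ.abs_diffQuot_le hp
  have hle := hbound.mono fun p hp => le_of_abs_le hp
  have hge := hbound.mono fun p hp => neg_le_of_abs_le hp
  rw [clarkeDeriv_eq_limsup_diffQuot, abs_le]
  exact ⟨le_limsup_of_frequently_le hge.frequently (isBoundedUnder_of_eventually_le hle),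
    limsup_le_of_le (isBoundedUnder_of_eventually_ge hge).isCoboundedUnder_le hle⟩

end ClarkeDerivative

section ClarkeDerivativeOfIntegral

variable {T : Type*} [MeasurableSpace T] {μ : Measure T}
variable {X : Type*} [NormedAddCommGroup X] [NormedSpace ℝ X]

theorem diffQuot_integral {f : T → X → ℝ} {s : Set X}
    (hint : ∀ y ∈ s, Integrable (fun t => f t y) μ) {u : X} {p : X × ℝ}
    (hp : p ∈ diffQuotDomain s u) :
    diffQuot (fun y => ∫ t, f t y ∂μ) u p = ∫ t, diffQuot (f t) u p ∂μ := by
  rw [diffQuot, ← integral_sub (hint _ hp.2.1) (hint _ hp.1), ← integral_div]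
  rfl

theorem integrable_diffQuot {f : T → X → ℝ} {s : Set X}
    (hint : ∀ y ∈ s, Integrable (fun t => f t y) μ) {u : X} {p : X × ℝ}
    (hp : p ∈ diffQuotDomain s u) :
    Integrable (fun t => diffQuot (f t) u p) μ :=
  ((hint _ hp.2.1).sub (hint _ hp.1)).div_const _

theorem clarkeDeriv_integral_le {f : T → X → ℝ} {s : Set X} {x : X} (hs : s ∈ 𝓝 x)
    {K : T → ℝ≥0} (hK : Integrable (fun t => (K t : ℝ)) μ)
    (hlip : ∀ᵐ t ∂μ, LipschitzOnWith (K t) (f t) s)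
    (hint : ∀ y ∈ s, Integrable (fun t => f t y) μ) (u : X)
    (hmeas : AEStronglyMeasurable (fun t => clarkeDeriv (f t) x u) μ) :
    clarkeDeriv (fun y => ∫ t, f t y ∂μ) x u ≤ ∫ t, clarkeDeriv (f t) x u ∂μ := by
  set l : Filter (X × ℝ) := 𝓝 x ×ˢ 𝓝[>] 0
  set D := diffQuotDomain s u
  have hD : D ∈ l := diffQuotDomain_mem_nhds_prod_nhdsGT hs u
  have : (comap ((↑) : D → X × ℝ) l).NeBot := comap_neBot fun t ht => by
    obtain ⟨p, hpt, hpD⟩ := nonempty_of_mem (inter_mem ht hD)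
    exact ⟨⟨p, hpD⟩, hpt⟩
  have hbound : ∀ᵐ t ∂μ, ∀ p : D, |diffQuot (f t) u p| ≤ K t * ‖u‖ := by
    filter_upwards [hlip] with t ht p using ht.abs_diffQuot_le p.2
  have hclarke : Integrable (fun t => clarkeDeriv (f t) x u) μ :=
    (hK.mul_const ‖u‖).mono' hmeas (by
      filter_upwards [hlip] with t ht using ht.abs_clarkeDeriv_le hs u)
  calc clarkeDeriv (fun y => ∫ t, f t y ∂μ) x u
      = limsup (fun p : D => ∫ t, diffQuot (f t) u p ∂μ) (comap (↑) l) := by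
        rw [clarkeDeriv_eq_limsup_diffQuot, ← limsup_comap_subtype_val hD]
        simp only [diffQuot_integral hint (Subtype.prop _)]
    _ ≤ ∫ t, clarkeDeriv (f t) x u ∂μ :=
        limsup_integral_le_integral_of_ae_limsup_le (fun p => integrable_diffQuot hint p.2)
          (hK.mul_const ‖u‖) hbound hclarke
          (ae_of_all _ fun t => (limsup_comap_subtype_val hD (diffQuot (f t) u)).le)

end ClarkeDerivativeOfIntegral

theorem integral_lipschitz_and_clarkeDeriv_le_general
    {X : Type*} [NormedAddCommGroup X] [NormedSpace ℝ X]
    {T : Type*} [MeasurableSpace T] (μ : Measure T)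
    (f : T → X → ℝ) (x : X) (δ : ℝ) (hδ : 0 < δ)
    (K : T → ℝ) (hKint : Integrable K μ) (hK0 : ∀ᵐ t ∂μ, 0 ≤ K t)
    (hlip : ∀ᵐ t ∂μ, LipschitzOnWith (K t).toNNReal (f t) (Metric.ball x δ))
    (hint : ∀ y ∈ Metric.ball x δ, Integrable (fun t => f t y) μ)
    (hmeas : ∀ u : X, AEStronglyMeasurable (fun t => clarkeDeriv (f t) x u) μ) :
    LipschitzOnWith (∫ t, K t ∂μ).toNNReal (fun y => ∫ t, f t y ∂μ) (Metric.ball x δ) ∧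
    (∀ u : X, clarkeDeriv (fun y => ∫ t, f t y ∂μ) x u ≤
      ∫ t, clarkeDeriv (f t) x u ∂μ) := by
  have hK : Integrable (fun t => ((K t).toNNReal : ℝ)) μ := hKint.real_toNNReal
  have hK_integral : ∫ t, ((K t).toNNReal : ℝ) ∂μ = ∫ t, K t ∂μ :=
    integral_congr_ae (hK0.mono fun t ht => Real.coe_toNNReal _ ht)
  refine ⟨hK_integral ▸ lipschitzOnWith_integral hK hlip hint, fun u => ?_⟩
  exact clarkeDeriv_integral_le (Metric.ball_mem_nhds x hδ) hK hlip hint u (hmeas u)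

/-- If each `f_t` is Lipschitz with constant `K(t)`, `K ∈ L¹`, on the ball `B(x,δ)`, and
`t ↦ f(t,y)` is integrable for `y ∈ B(x,δ)`, then `I_f(y) = ∫_T f(t,y) dμ` is Lipschitz on
`B(x,δ)` with constant `∫ K dμ`, and `I_f°(x;u) ≤ ∫_T f_t°(x;u) dμ(t)` for every `u`. -/
theorem integral_lipschitz_and_clarkeDeriv_le
    {X : Type*} [NormedAddCommGroup X] [NormedSpace ℝ X]
    {T : Type*} [MeasurableSpace T] (μ : Measure T) [SigmaFinite μ]
    (f : T → X → ℝ) (x : X) (δ : ℝ) (hδ : 0 < δ)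
    (K : T → ℝ) (hKint : Integrable K μ) (hK0 : ∀ᵐ t ∂μ, 0 ≤ K t)
    (hlip : ∀ᵐ t ∂μ, LipschitzOnWith (K t).toNNReal (f t) (Metric.ball x δ))
    (hint : ∀ y ∈ Metric.ball x δ, Integrable (fun t => f t y) μ)
    (hmeas : ∀ u : X, AEStronglyMeasurable (fun t => clarkeDeriv (f t) x u) μ) :
    LipschitzOnWith (∫ t, K t ∂μ).toNNReal (fun y => ∫ t, f t y ∂μ) (Metric.ball x δ) ∧
    (∀ u : X, clarkeDeriv (fun y => ∫ t, f t y ∂μ) x u ≤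
      ∫ t, clarkeDeriv (f t) x u ∂μ) :=
  integral_lipschitz_and_clarkeDeriv_le_general μ f x δ hδ K hKint hK0 hlip hint hmeas
end
end

section
/- Let X be a Banach space, A ⊆ X* nonempty weak*-closed convex, and B = {0} × ℝ₊ ⊆ X* × ℝ. If C ⊆ X* × ℝ is weak*-compactly generated in the sense that C is weak*-closed convex with recession cone C_∞ satisfying C_∞ ∩ (−B) = {(0,0)}, then C + B is weak*-closed and (C + B)_∞ = C_∞ + B. -/
open Pointwise
noncomputable section

/-!
Write each point of `C + ℝ₊ d` as `c + t • d` with `c ∈ C`, `t ≥ 0`, and follow the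
coefficients `t` along an ultrafilter: a convergent net of points for closedness, the
half-line `p + ℝ₊ v` (with `t` rescaled by the parameter) for the recession cone. Bounded
along the ultrafilter, `t` converges and the limit of the `c`'s gives the decomposition of the
limit point, resp. of `v`. Unbounded, `t → ∞` and `(c - c₀) / t → -d`, which puts `-d` into
`C_∞`, contrary to `C_∞ ∩ -ℝ₊ d = {0}`.
-/

open Filter Topology

/-- The recession cone of a convex set:
`C_∞ = {v : ∃ c ∈ C, c + λv ∈ C for all λ ≥ 0}`. -/
def recCone {V : Type*} [AddCommMonoid V] [Module ℝ V] (C : Set V) : Set V :=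
  {v | ∃ c ∈ C, ∀ l : ℝ, 0 ≤ l → c + l • v ∈ C}

theorem Ultrafilter.exists_tendsto_or_tendsto_atTop {ι : Type*} (F : Ultrafilter ι)
    {f : ι → ℝ} (hf : IsBoundedUnder (· ≥ ·) F f) :
    (∃ s, Tendsto f F (𝓝 s)) ∨ Tendsto f F atTop := by
  by_cases hbdd : IsBoundedUnder (· ≤ ·) F f
  · obtain ⟨m, hm⟩ := hf
    obtain ⟨M, hM⟩ := hbdd
    have hIcc : ↑(F.map f) ≤ 𝓟 (Set.Icc m M) :=
      le_principal_iff.2 ((hm.and hM).mono fun _ h => h)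
    obtain ⟨s, -, hs⟩ := isCompact_Icc.ultrafilter_le_nhds (F.map f) hIcc
    exact Or.inl ⟨s, hs⟩
  · refine Or.inr (tendsto_atTop.2 fun M => ?_)
    have hnot : ¬∀ᶠ i in F, f i ≤ M := fun h => hbdd ⟨M, h⟩
    exact (F.eventually_not.2 hnot).mono fun _ h => (not_le.1 h).le

section RecessionCone

variable {V : Type*} [AddCommGroup V] [Module ℝ V] {C : Set V} {d : V}

def ray (d : V) : Set V := (· • d) '' Set.Ici (0 : ℝ)

theorem mem_add_ray_iff {x : V} : x ∈ C + ray d ↔ ∃ t : ℝ, 0 ≤ t ∧ x - t • d ∈ C := by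
  constructor
  · rintro ⟨c, hc, _, ⟨t, ht, rfl⟩, rfl⟩
    exact ⟨t, ht, by rwa [add_sub_cancel_right]⟩
  · rintro ⟨t, ht, hx⟩
    exact ⟨_, hx, _, ⟨t, ht, rfl⟩, sub_add_cancel x _⟩

theorem add_ray_subset_recCone_add_ray : recCone C + ray d ⊆ recCone (C + ray d) := by
  rintro _ ⟨u, ⟨c, hc, hcu⟩, _, ⟨s, hs, rfl⟩, rfl⟩
  refine ⟨c, mem_add_ray_iff.2 ⟨0, le_rfl, by simpa using hc⟩, fun l hl => ?_⟩
  refine mem_add_ray_iff.2 ⟨l * s, mul_nonneg hl hs, ?_⟩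
  convert hcu l hl using 1
  rw [smul_add, smul_smul]
  abel

variable [TopologicalSpace V] [IsTopologicalAddGroup V] [ContinuousSMul ℝ V]
variable (hC : IsClosed C) (hconv : Convex ℝ C)
include hC hconv

theorem mem_recCone_of_tendsto {c₀ : V} (hc₀ : c₀ ∈ C) {ι : Type*} {F : Filter ι}
    [F.NeBot] {q : ι → V} {T : ι → ℝ} (hq : ∀ᶠ i in F, q i ∈ C) (hT : Tendsto T F atTop)
    {u : V} (hu : Tendsto (fun i => (T i)⁻¹ • (q i - c₀)) F (𝓝 u)) : u ∈ recCone C := by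
  refine ⟨c₀, hc₀, fun l hl => ?_⟩
  -- `c₀ + (l / T) • (q - c₀)` lies on the segment `[c₀, q]` once `T ≥ l`.
  have hmem : ∀ᶠ i in F, c₀ + (l / T i) • (q i - c₀) ∈ C := by
    filter_upwards [hq, hT.eventually_ge_atTop (max l 1)] with i hqi hTi
    have hTpos : 0 < T i := one_pos.trans_le ((le_max_right _ _).trans hTi)
    have hle : l / T i ≤ 1 := (div_le_one hTpos).2 ((le_max_left _ _).trans hTi)
    convert hconv hc₀ hqi (sub_nonneg.2 hle) (by positivity) (sub_add_cancel _ _) using 1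
    rw [smul_sub, sub_smul, one_smul]
    abel
  have hlim : Tendsto (fun i => c₀ + (l / T i) • (q i - c₀)) F (𝓝 (c₀ + l • u)) := by
    simpa only [div_eq_mul_inv, mul_smul] using tendsto_const_nhds.add (hu.const_smul l)
  exact hC.mem_of_tendsto hlim hmem

theorem neg_mem_recCone_of_tendsto_atTop {c₀ : V} (hc₀ : c₀ ∈ C) {ι : Type*} {F : Filter ι}
    [F.NeBot] {y : ι → V} {t : ι → ℝ} (hy : ∀ᶠ i in F, y i - t i • d ∈ C)
    (ht : Tendsto t F atTop) (hy₀ : Tendsto (fun i => (t i)⁻¹ • y i) F (𝓝 0)) : -d ∈ recCone C := by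
  refine mem_recCone_of_tendsto hC hconv hc₀ hy ht ?_
  have hlim := (hy₀.sub_const d).sub (ht.inv_tendsto_atTop.smul_const c₀)
  rw [zero_sub, zero_smul, sub_zero] at hlim
  refine hlim.congr' ?_
  filter_upwards [ht.eventually_ne_atTop 0] with i hti
  rw [Pi.inv_apply, smul_sub, smul_sub, inv_smul_smul₀ hti]

theorem isClosed_add_ray (hd : -d ∉ recCone C) : IsClosed (C + ray d) := by
  refine isClosed_iff_ultrafilter.2 fun x F hFx hF => ?_
  choose! t ht using fun y (hy : y ∈ C + ray d) => mem_add_ray_iff.1 hy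
  have ht₀ : ∀ᶠ y in F, 0 ≤ t y := Filter.mem_of_superset hF fun y hy => (ht y hy).1
  have hC' : ∀ᶠ y in F, y - t y • d ∈ C := Filter.mem_of_superset hF fun y hy => (ht y hy).2
  rcases F.exists_tendsto_or_tendsto_atTop ⟨0, ht₀⟩ with ⟨s, hs⟩ | htop
  · refine mem_add_ray_iff.2 ⟨s, ge_of_tendsto hs ht₀, hC.mem_of_tendsto ?_ hC'⟩
    exact (tendsto_id'.2 hFx).sub (hs.smul_const d)
  · obtain ⟨y, hy⟩ := hC'.exists
    refine absurd (neg_mem_recCone_of_tendsto_atTop hC hconv hy hC' htop ?_) hd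
    simpa using htop.inv_tendsto_atTop.smul (tendsto_id'.2 hFx)

theorem recCone_add_ray (hd : -d ∉ recCone C) : recCone (C + ray d) = recCone C + ray d := by
  refine subset_antisymm ?_ add_ray_subset_recCone_add_ray
  rintro v ⟨p, -, hpv⟩
  choose! t ht using fun l (hl : 0 ≤ l) => mem_add_ray_iff.1 (hpv l hl)
  obtain ⟨c₀, hc₀⟩ : C.Nonempty := ⟨_, (ht 0 le_rfl).2⟩
  set F := Ultrafilter.of (atTop : Filter ℝ)
  have hF : (F : Filter ℝ) ≤ atTop := Ultrafilter.of_le _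
  have hpos : ∀ᶠ l : ℝ in F, 0 < l := hF (eventually_gt_atTop 0)
  have hC' : ∀ᶠ l in F, p + l • v - t l • d ∈ C := hpos.mono fun l hl => (ht l hl.le).2
  have hratio₀ : ∀ᶠ l in F, 0 ≤ t l / l :=
    hpos.mono fun l hl => div_nonneg (ht l hl.le).1 hl.le
  rcases F.exists_tendsto_or_tendsto_atTop ⟨0, hratio₀⟩ with ⟨s, hs⟩ | htop
  · have hu : v - s • d ∈ recCone C := by
      refine mem_recCone_of_tendsto hC hconv hc₀ hC' hF ?_
      have hlim := ((tendsto_inv_atTop_zero.mono_left hF).smul_const (p - c₀)).add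
        ((hs.smul_const d).const_sub v)
      rw [zero_smul, zero_add] at hlim
      refine hlim.congr' (hpos.mono fun l hl => ?_)
      simp only [smul_sub, smul_add, inv_smul_smul₀ hl.ne', div_eq_inv_mul, mul_smul]
      abel
    exact ⟨v - s • d, hu, s • d, ⟨s, ge_of_tendsto hs hratio₀, rfl⟩, sub_add_cancel v _⟩
  · have ht_top : Tendsto t F atTop :=
      (htop.atTop_mul_atTop₀ hF).congr' (hpos.mono fun l hl => div_mul_cancel₀ _ hl.ne')
    refine absurd (neg_mem_recCone_of_tendsto_atTop hC hconv hc₀ hC' ht_top ?_) hd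
    have hlim :=
      (ht_top.inv_tendsto_atTop.smul_const p).add (htop.inv_tendsto_atTop.smul_const v)
    rw [zero_smul, zero_smul, add_zero] at hlim
    refine hlim.congr' (Eventually.of_forall fun l => ?_)
    simp only [Pi.inv_apply, inv_div]
    rw [smul_add, smul_smul, div_eq_inv_mul]

end RecessionCone

theorem closed_add_ray_of_recCone_inter_general
    {X : Type*} [NormedAddCommGroup X] [NormedSpace ℝ X]
    (C : Set (WeakDual ℝ X × ℝ)) (hCcl : IsClosed C)
    (hCconv : Convex ℝ C)
    (B : Set (WeakDual ℝ X × ℝ)) (hB : B = {p | p.1 = 0 ∧ 0 ≤ p.2})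
    (hrec : recCone C ∩ (-B) = {0}) :
    IsClosed (C + B) ∧ recCone (C + B) = recCone C + B := by
  have hB_ray : B = ray ((0 : WeakDual ℝ X), (1 : ℝ)) := by
    ext ⟨x, r⟩
    simp [hB, ray, eq_comm, and_comm]
  have hd : -((0 : WeakDual ℝ X), (1 : ℝ)) ∉ recCone C := fun h => by
    have hmem : -((0 : WeakDual ℝ X), (1 : ℝ)) ∈ recCone C ∩ -B := ⟨h, by simp [hB]⟩
    simp [hrec] at hmem
  subst hB_ray
  exact ⟨isClosed_add_ray hCcl hCconv hd, recCone_add_ray hCcl hCconv hd⟩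

/-- Dieudonné-type closedness: in `X* × ℝ` (with `X*` carrying the weak* topology), if `C` is
nonempty, weak*-closed and convex with `C_∞ ∩ (−B) = {0}` where `B = {0} × ℝ₊`, then `C + B`
is weak*-closed and `(C + B)_∞ = C_∞ + B`. -/
theorem closed_add_ray_of_recCone_inter
    {X : Type*} [NormedAddCommGroup X] [NormedSpace ℝ X]
    (A : Set (WeakDual ℝ X)) (hAne : A.Nonempty) (hAcl : IsClosed A) (hAconv : Convex ℝ A)
    (C : Set (WeakDual ℝ X × ℝ)) (hCne : C.Nonempty) (hCcl : IsClosed C)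
    (hCconv : Convex ℝ C)
    (B : Set (WeakDual ℝ X × ℝ)) (hB : B = {p | p.1 = 0 ∧ 0 ≤ p.2})
    (hrec : recCone C ∩ (-B) = {0}) :
    IsClosed (C + B) ∧ recCone (C + B) = recCone C + B :=
  closed_add_ray_of_recCone_inter_general C hCcl hCconv B hB hrec
end
end

section
/- Let X be a separable Banach space, (T,Σ,μ) a finite measure space, and x* : T → X* a weak*-measurable function such that x*(t) ∈ ∂_{ℓ(t)} f_t(x) a.e. for an integrable ℓ ≥ 0 and convex normal integrand f, where the functional x(·) ↦ ∫_T f(t, x(t)) dμ is bounded above on a ‖·‖_∞-neighborhood of a constant function x₀. Then ∫_T ‖x*(t)‖ dμ(t) < +∞, i.e., x* is Gelfand (in fact Bochner if X* is separable) integrable. -/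
/-!
Pick a sequence `(vₙ)` in the unit ball of `X` that norms the dual, so that `‖x*(t)‖` is the
measurable function `supₙ x*(t)(vₙ)`, and choose measurably an index `N(t)` with
`‖x*(t)‖ / 2 ≤ x*(t)(v_{N(t)})`. The test function `u = x₀ + δ v_N` lies in the `δ`-ball around
`x₀`, so `f(·, u(·))` has an integrable majorant `g`. The `ℓ`-subgradient inequality at `u(t)` then
gives `(δ / 2) ‖x*(t)‖ ≤ g(t) - f(t, x) + ℓ(t) + x*(t)(x) - x*(t)(x₀)`, an integrable bound.
-/

open MeasureTheory
noncomputable section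

section

variable {X : Type*} [NormedAddCommGroup X] [NormedSpace ℝ X]

structure IsNormingSeq (v : ℕ → X) : Prop where
  norm_le_one : ∀ n, ‖v n‖ ≤ 1
  exists_lt_apply : ∀ (φ : StrongDual ℝ X) {c : ℝ}, c < ‖φ‖ → ∃ n, c < φ (v n)

lemma exists_lt_apply_mem_closedBall_of_lt_norm (φ : StrongDual ℝ X) {c : ℝ} (hc : c < ‖φ‖) :
    ∃ y ∈ Metric.closedBall (0 : X) 1, c < φ y := by
  obtain ⟨z, hz, hcz⟩ := φ.exists_lt_apply_of_lt_opNorm hc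
  rcases lt_abs.mp hcz with h | h
  · exact ⟨z, mem_closedBall_zero_iff.mpr hz.le, h⟩
  · exact ⟨-z, mem_closedBall_zero_iff.mpr (by simpa using hz.le), by simpa using h⟩

variable (X) in
theorem exists_isNormingSeq [TopologicalSpace.SeparableSpace X] :
    ∃ v : ℕ → X, IsNormingSeq v := by
  have : Nonempty (Metric.closedBall (0 : X) 1) :=
    ⟨⟨0, Metric.mem_closedBall_self zero_le_one⟩⟩
  obtain ⟨w, hw⟩ := TopologicalSpace.exists_dense_seq (Metric.closedBall (0 : X) 1)
  refine ⟨fun n => w n, fun n => mem_closedBall_zero_iff.mp (w n).2, fun φ _ hc => ?_⟩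
  obtain ⟨y, hy, hcy⟩ := exists_lt_apply_mem_closedBall_of_lt_norm φ hc
  exact hw.exists_mem_open ((isOpen_lt continuous_const φ.continuous).preimage
    continuous_subtype_val) ⟨⟨y, hy⟩, hcy⟩

namespace IsNormingSeq

variable {v : ℕ → X} (hv : IsNormingSeq v)
include hv

lemma apply_le_norm (φ : StrongDual ℝ X) (n : ℕ) : φ (v n) ≤ ‖φ‖ :=
  calc φ (v n) ≤ ‖φ (v n)‖ := le_abs_self _
    _ ≤ ‖φ‖ * ‖v n‖ := φ.le_opNorm (v n)
    _ ≤ ‖φ‖ := mul_le_of_le_one_right (norm_nonneg _) (hv.norm_le_one n)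

lemma norm_eq_iSup (φ : StrongDual ℝ X) : ‖φ‖ = ⨆ n, φ (v n) :=
  (ciSup_eq_of_forall_le_of_forall_lt_exists_gt (hv.apply_le_norm φ)
    fun _ hc => hv.exists_lt_apply φ hc).symm

variable {T : Type*} [MeasurableSpace T] {xs : T → StrongDual ℝ X}

lemma measurable_norm (hmeas : ∀ n, Measurable fun t => xs t (v n)) :
    Measurable fun t => ‖xs t‖ := by
  simpa only [hv.norm_eq_iSup] using Measurable.iSup hmeas

lemma exists_measurable_index_half_norm_le (hmeas : ∀ n, Measurable fun t => xs t (v n)) :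
    ∃ N : T → ℕ, Measurable N ∧ ∀ t, ‖xs t‖ / 2 ≤ xs t (v (N t)) := by
  classical
  have hex : ∀ t, ∃ n, ‖xs t‖ / 2 ≤ xs t (v n) := fun t => by
    rcases (norm_nonneg (xs t)).eq_or_lt with h | h
    · exact ⟨0, by simp [norm_eq_zero.mp h.symm]⟩
    · obtain ⟨n, hn⟩ := hv.exists_lt_apply (xs t) (half_lt_self h)
      exact ⟨n, hn.le⟩
  exact ⟨fun t => Nat.find (hex t),
    measurable_find hex fun n => measurableSet_le ((hv.measurable_norm hmeas).div_const 2)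
      (hmeas n),
    fun t => Nat.find_spec (hex t)⟩

end IsNormingSeq

end

lemma exists_integrable_ae_le_of_upperIntegral_lt_top {T : Type*} [MeasurableSpace T]
    {μ : Measure T} {φ : T → EReal} (h : upperIntegral μ φ < ⊤) :
    ∃ g : T → ℝ, Integrable g μ ∧ ∀ᵐ t ∂μ, φ t ≤ (g t : EReal) := by
  obtain ⟨-, ⟨g, hg, hφg, -⟩, -⟩ := sInf_lt_iff.mp h
  exact ⟨g, hg, hφg⟩

lemma EReal.coe_le_sub_add_of_le {a c l g : ℝ} {F : EReal}
    (h : (a : EReal) ≤ F - c + l) (hF : F ≤ g) : a ≤ g - c + l := by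
  have : F - c + l ≤ ((g - c + l : ℝ) : EReal) := by
    rw [EReal.coe_add, EReal.coe_sub]
    gcongr
    exact EReal.sub_le_sub hF le_rfl
  exact EReal.coe_le_coe_iff.mp (h.trans this)

theorem selection_norm_integrable_general
    {X : Type*} [NormedAddCommGroup X] [NormedSpace ℝ X]
    [TopologicalSpace.SeparableSpace X]
    [MeasurableSpace X]
    {T : Type*} [MeasurableSpace T] (μ : Measure T)
    (f : T → X → EReal)
    (x : X) (ℓ : T → ℝ) (hℓint : Integrable ℓ μ)
    (xs : T → StrongDual ℝ X)
    -- weak*-measurability and weak*-integrability of `x*(·)`: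
    (hmeas : ∀ v : X, Measurable fun t => xs t v)
    (hwint : ∀ v : X, Integrable (fun t => xs t v) μ)
    -- `f(·, x)` is (finite and) integrable:
    (fx : T → ℝ) (hfx : ∀ᵐ t ∂μ, f t x = ((fx t : ℝ) : EReal)) (hfxint : Integrable fx μ)
    -- `x*(t) ∈ ∂_{ℓ(t)} f_t(x)` a.e.:
    (hsel : ∀ᵐ t ∂μ, ∀ y : X,
      ((xs t y - xs t x : ℝ) : EReal) ≤ f t y - f t x + ((ℓ t : ℝ) : EReal))
    -- the integral functional is bounded above on an `L^∞`-ball around the constant `x₀`: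
    (x₀ : X) (δ M : ℝ) (hδ : 0 < δ)
    (hbdd : ∀ u : T → X, Measurable u → (∀ᵐ t ∂μ, ‖u t - x₀‖ ≤ δ) →
      upperIntegral μ (fun t => f t (u t)) ≤ (M : EReal)) :
    Integrable (fun t => ‖xs t‖) μ := by
  obtain ⟨v, hv⟩ := exists_isNormingSeq X
  have hmeas_v : ∀ n, Measurable fun t => xs t (v n) := fun n => hmeas (v n)
  obtain ⟨N, hN, hNv⟩ := hv.exists_measurable_index_half_norm_le hmeas_v
  set u : T → X := fun t => x₀ + δ • v (N t)
  have hu_ball : ∀ t, ‖u t - x₀‖ ≤ δ := fun t => by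
    simpa [u, norm_smul, abs_of_pos hδ] using
      mul_le_of_le_one_right hδ.le (hv.norm_le_one (N t))
  have hu_meas : Measurable u := (measurable_from_nat (f := fun n => x₀ + δ • v n)).comp hN
  obtain ⟨g, hg, hug⟩ := exists_integrable_ae_le_of_upperIntegral_lt_top
    ((hbdd u hu_meas (.of_forall hu_ball)).trans_lt (EReal.coe_lt_top M))
  refine Integrable.mono' (g := fun t => 2 / δ * (g t - fx t + ℓ t + xs t x - xs t x₀))
    ((((((hg.sub hfxint).add hℓint).add (hwint x)).sub (hwint x₀))).const_mul _)
    (hv.measurable_norm hmeas_v).aestronglyMeasurable ?_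
  filter_upwards [hsel, hfx, hug] with t hsel_t hfx_t hug_t
  have hsub : xs t (u t) - xs t x ≤ g t - fx t + ℓ t :=
    EReal.coe_le_sub_add_of_le (hfx_t ▸ hsel_t (u t)) hug_t
  have hu_apply : xs t (u t) = xs t x₀ + δ * xs t (v (N t)) := by simp [u]
  have hδN := mul_le_mul_of_nonneg_left (hNv t) hδ.le
  rw [norm_norm, div_mul_eq_mul_div, le_div_iff₀ hδ]
  linarith

/-- If `x*(·)` is a weak*-measurable, weak*-integrable selection of `∂_{ℓ(t)} f_t(x)` for a
convex normal integrand `f` on a separable Banach space, and the functional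
`u(·) ↦ ∫_T f(t,u(t)) dμ` is bounded above on a `‖·‖_∞`-neighborhood of a constant function
`x₀`, then `∫_T ‖x*(t)‖ dμ(t) < +∞`, i.e. `x*` is Gelfand integrable. -/
theorem selection_norm_integrable
    {X : Type*} [NormedAddCommGroup X] [NormedSpace ℝ X]
    [TopologicalSpace.SeparableSpace X] [CompleteSpace X]
    [MeasurableSpace X] [BorelSpace X]
    {T : Type*} [MeasurableSpace T] (μ : Measure T) [IsFiniteMeasure μ]
    (f : T → X → EReal)
    (hlsc : ∀ᵐ t ∂μ, LowerSemicontinuous (f t))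
    (hconv : ∀ᵐ t ∂μ, Convex ℝ {p : X × ℝ | f t p.1 ≤ (p.2 : EReal)})
    (hproper : ∀ᵐ t ∂μ, ∀ y : X, f t y ≠ ⊥)
    (x : X) (ℓ : T → ℝ) (hℓint : Integrable ℓ μ) (hℓ0 : ∀ᵐ t ∂μ, 0 ≤ ℓ t)
    (xs : T → StrongDual ℝ X)
    -- weak*-measurability and weak*-integrability of `x*(·)`:
    (hmeas : ∀ v : X, Measurable fun t => xs t v)
    (hwint : ∀ v : X, Integrable (fun t => xs t v) μ)
    -- `f(·, x)` is (finite and) integrable: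
    (fx : T → ℝ) (hfx : ∀ᵐ t ∂μ, f t x = ((fx t : ℝ) : EReal)) (hfxint : Integrable fx μ)
    -- `x*(t) ∈ ∂_{ℓ(t)} f_t(x)` a.e.:
    (hsel : ∀ᵐ t ∂μ, ∀ y : X,
      ((xs t y - xs t x : ℝ) : EReal) ≤ f t y - f t x + ((ℓ t : ℝ) : EReal))
    -- the integral functional is bounded above on an `L^∞`-ball around the constant `x₀`:
    (x₀ : X) (δ M : ℝ) (hδ : 0 < δ)
    (hbdd : ∀ u : T → X, Measurable u → (∀ᵐ t ∂μ, ‖u t - x₀‖ ≤ δ) →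
      upperIntegral μ (fun t => f t (u t)) ≤ (M : EReal)) :
    Integrable (fun t => ‖xs t‖) μ :=
  selection_norm_integrable_general μ f x ℓ hℓint xs hmeas hwint fx hfx hfxint hsel x₀ δ M hδ hbdd
end
end

section
/- Let (T,Σ,μ) be a complete finite measure space and f : T × ℝᵈ → ℝ ∪ {+∞} a convex normal integrand such that I_f(x) = ∫_T f(t,x) dμ is continuous at a point x₀ ∈ ℝᵈ. Then for a.e. t ∈ T, x₀ ∈ int(dom f_t), and consequently f_t is continuous on int(dom f_t) ∋ x₀ for a.e. t. -/
/-!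
Finiteness of `I_f` near `x₀` gives, for each `y` near `x₀`, an integrable majorant of `f(·, y)`,
so `f(t, y) < ⊤` for a.e. `t`. Taking `y` in a countable dense subset of a neighbourhood `U` of
`x₀` and discarding countably many null sets, `U ⊆ cl (dom f_t)` for a.e. `t`. In finite dimension
a convex set has the same interior as its closure, so `x₀ ∈ int (dom f_t)`; and a finite convex
function is continuous on the interior of its domain.
-/

open MeasureTheory Filter Topology
noncomputable section

theorem ae_ne_top_of_upperIntegral_ne_top {T : Type*} [MeasurableSpace T] {μ : Measure T}
    {φ : T → EReal} (h : upperIntegral μ φ ≠ ⊤) : ∀ᵐ t ∂μ, φ t ≠ ⊤ := by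
  obtain ⟨_, ⟨g, -, hφg, -⟩, -⟩ := not_forall₂.1 (mt sInf_eq_top.2 h)
  filter_upwards [hφg] with t ht
  exact ne_top_of_le_ne_top (EReal.coe_ne_top _) ht

theorem eventually_subset_closure_of_forall_eventually {α X : Type*} {l : Filter α}
    [CountableInterFilter l] [TopologicalSpace X] [TopologicalSpace.PseudoMetrizableSpace X]
    [TopologicalSpace.SeparableSpace X] {p : α → X → Prop} {s : Set X}
    (h : ∀ x ∈ s, ∀ᶠ a in l, p a x) : ∀ᶠ a in l, s ⊆ closure {x | p a x} := by
  obtain ⟨c, hcs, hc, hsc⟩ :=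
    (TopologicalSpace.IsSeparable.of_separableSpace s).exists_countable_dense_subset
  filter_upwards [(eventually_countable_ball hc).2 fun x hx => h x (hcs hx)] with a ha
  exact hsc.trans (closure_mono ha)

theorem Convex.interior_closure_eq_interior {E : Type*} [NormedAddCommGroup E] [NormedSpace ℝ E]
    [FiniteDimensional ℝ E] {s : Set E} (hs : Convex ℝ s) : interior (closure s) = interior s := by
  rcases (interior (closure s)).eq_empty_or_nonempty with h | h
  · exact h.trans (Set.subset_empty_iff.1 (h ▸ interior_mono subset_closure)).symm
  refine hs.interior_closure_eq_interior_of_nonempty_interior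
    (hs.interior_nonempty_iff_affineSpan_eq_top.2 (top_unique ?_))
  rw [← hs.closure.interior_nonempty_iff_affineSpan_eq_top.1 h, affineSpan_le]
  exact closure_minimal (subset_affineSpan ℝ s) (affineSpan ℝ s).closed_of_finiteDimensional

theorem convexOn_toReal_of_convex_epigraph {E : Type*} [AddCommGroup E] [Module ℝ E]
    {f : E → EReal} (hconv : Convex ℝ {p : E × ℝ | f p.1 ≤ (p.2 : EReal)})
    (hbot : ∀ y, f y ≠ ⊥) : ConvexOn ℝ {y | f y ≠ ⊤} (fun y => (f y).toReal) := by
  have hcombo : ∀ ⦃x⦄, f x ≠ ⊤ → ∀ ⦃y⦄, f y ≠ ⊤ → ∀ ⦃a b : ℝ⦄, 0 ≤ a → 0 ≤ b → a + b = 1 →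
      f (a • x + b • y) ≤ ((a * (f x).toReal + b * (f y).toReal : ℝ) : EReal) := by
    intro x hx y hy a b ha hb hab
    simpa using hconv (x := (x, (f x).toReal)) (y := (y, (f y).toReal))
      (EReal.coe_toReal hx (hbot x)).ge (EReal.coe_toReal hy (hbot y)).ge ha hb hab
  refine ⟨fun x hx y hy a b ha hb hab =>
    ne_top_of_le_ne_top (EReal.coe_ne_top _) (hcombo hx hy ha hb hab),
    fun x hx y hy a b ha hb hab => ?_⟩
  simpa only [smul_eq_mul, EReal.toReal_coe] using
    EReal.toReal_le_toReal (hcombo hx hy ha hb hab) (hbot _) (EReal.coe_ne_top _)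

theorem continuousOn_interior_of_convex_epigraph {E : Type*} [NormedAddCommGroup E]
    [NormedSpace ℝ E] [FiniteDimensional ℝ E] {f : E → EReal}
    (hconv : Convex ℝ {p : E × ℝ | f p.1 ≤ (p.2 : EReal)}) (hbot : ∀ y, f y ≠ ⊥) :
    ContinuousOn f (interior {y | f y ≠ ⊤}) := by
  have h := (convexOn_toReal_of_convex_epigraph hconv hbot).continuousOn_interior
  refine (continuous_coe_real_ereal.comp_continuousOn h).congr fun y hy => ?_
  exact (EReal.coe_toReal (interior_subset hy) (hbot y)).symm

theorem ae_mem_interior_domain_and_continuousOn_general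
    {d : ℕ} {T : Type*} [MeasurableSpace T] (μ : Measure T)
    (f : T → (Fin d → ℝ) → EReal)
    (hconv : ∀ᵐ t ∂μ, Convex ℝ {p : (Fin d → ℝ) × ℝ | f t p.1 ≤ (p.2 : EReal)})
    (hproper : ∀ᵐ t ∂μ, ∀ y, f t y ≠ ⊥)
    (x₀ : Fin d → ℝ)
    (hfin : ∃ r : ℝ, upperIntegral μ (fun t => f t x₀) = (r : EReal))
    (hcont : ContinuousAt (fun y => upperIntegral μ (fun t => f t y)) x₀) :
    ∀ᵐ t ∂μ, x₀ ∈ interior {y | f t y ≠ ⊤} ∧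
      ContinuousOn (f t) (interior {y | f t y ≠ ⊤}) := by
  obtain ⟨r, hr⟩ := hfin
  set U := {y | upperIntegral μ (fun t => f t y) ≠ ⊤}
  have hU : U ∈ 𝓝 x₀ :=
    hcont.preimage_mem_nhds (isOpen_compl_singleton.mem_nhds (hr ▸ EReal.coe_ne_top r))
  have hdense : ∀ᵐ t ∂μ, U ⊆ closure {y | f t y ≠ ⊤} :=
    eventually_subset_closure_of_forall_eventually fun _ hy => ae_ne_top_of_upperIntegral_ne_top hy
  filter_upwards [hdense, hconv, hproper] with t hUt hconvt hbott
  refine ⟨?_, continuousOn_interior_of_convex_epigraph hconvt hbott⟩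
  rw [← (convexOn_toReal_of_convex_epigraph hconvt hbott).1.interior_closure_eq_interior]
  exact interior_mono hUt (mem_interior_iff_mem_nhds.2 hU)

/-- If `f` is a convex normal integrand on `T × ℝᵈ` and `I_f` is finite and continuous at a
point `x₀ ∈ ℝᵈ`, then for a.e. `t`, `x₀ ∈ int(dom f_t)` and `f_t` is continuous on
`int(dom f_t)`. -/
theorem ae_mem_interior_domain_and_continuousOn
    {d : ℕ} {T : Type*} [MeasurableSpace T] (μ : Measure T)
    [IsFiniteMeasure μ] [μ.IsComplete]
    (f : T → (Fin d → ℝ) → EReal)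
    (hlsc : ∀ᵐ t ∂μ, LowerSemicontinuous (f t))
    (hconv : ∀ᵐ t ∂μ, Convex ℝ {p : (Fin d → ℝ) × ℝ | f t p.1 ≤ (p.2 : EReal)})
    (hproper : ∀ᵐ t ∂μ, ∀ y, f t y ≠ ⊥)
    (x₀ : Fin d → ℝ)
    (hfin : ∃ r : ℝ, upperIntegral μ (fun t => f t x₀) = (r : EReal))
    (hcont : ContinuousAt (fun y => upperIntegral μ (fun t => f t y)) x₀) :
    ∀ᵐ t ∂μ, x₀ ∈ interior {y | f t y ≠ ⊤} ∧
      ContinuousOn (f t) (interior {y | f t y ≠ ⊤}) :=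
  ae_mem_interior_domain_and_continuousOn_general μ f hconv hproper x₀ hfin hcont
end
end

section
/- Let X be a Banach space, f : X → ℝ ∪ {+∞} proper convex lsc, x ∈ dom f, ε > 0, and x* ∈ ∂_ε f(x). Then for every λ > 0 there exist x̄ ∈ X and x̄* ∈ ∂f(x̄) such that ‖x̄ − x‖ ≤ ε/λ, ‖x̄* − x*‖ ≤ λ, and |f(x̄) − ⟨x̄*, x̄ − x⟩ − f(x)| ≤ 2ε. -/
/-!
Tilting `f` by `x*` and truncating at the level `f x - x* x` gives a real-valued lower
semicontinuous function `h = min (f - x*) (f x - x* x)` with `h ≥ h x - ε`. Ekeland's principle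
with constant `λ` yields `x̄` with `λ ‖x̄ - x‖ ≤ ε` at which `f - x*` lies above the cone
`(f - x*) x̄ - λ ‖· - x̄‖`; since `h x̄ < h x` unless `x̄ = x`, the truncation does not affect
`x̄`. Separating the (shifted) epigraph of `f - x*` from the open cone below it produces a
functional of norm at most `λ` that is a subgradient of `f - x*` at `x̄`. The value estimate
combines `-ε ≤ h x̄ - h x ≤ 0` with `|(x̄* - x*) (x̄ - x)| ≤ λ ‖x̄ - x‖ ≤ ε`.
-/

open Filter Topology Set Metric

namespace Ekeland

variable {X : Type*} [MetricSpace X] {h : X → ℝ} {lam δ : ℝ} {y z : X}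

/-- `y ∈ below h lam z` is Ekeland's order `y ≼ z`. -/
def below (h : X → ℝ) (lam : ℝ) (z : X) : Set X := {y | h y + lam * dist y z ≤ h z}

theorem self_mem_below (z : X) : z ∈ below h lam z := by simp [below]

theorem below_subset_below (hlam : 0 ≤ lam) (hy : y ∈ below h lam z) :
    below h lam y ⊆ below h lam z := fun w hw => by
  simp only [below, mem_ofPred_eq] at hy hw ⊢
  nlinarith [dist_triangle w y z]

theorem isClosed_below (hh : LowerSemicontinuous h) (z : X) : IsClosed (below h lam z) :=
  (hh.add (continuous_const.mul (continuous_id.dist continuous_const)).lowerSemicontinuous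
    ).isClosed_preimage (h z)

theorem exists_mem_below_forall_le_add (hB : BddBelow (range h)) (z : X) (hδ : 0 < δ) :
    ∃ y ∈ below h lam z, ∀ w ∈ below h lam z, h y ≤ h w + δ := by
  have hne : (h '' below h lam z).Nonempty := ⟨h z, z, self_mem_below z, rfl⟩
  obtain ⟨_, ⟨y, hy, rfl⟩, hlt⟩ := exists_lt_of_csInf_lt hne (lt_add_of_pos_right _ hδ)
  refine ⟨y, hy, fun w hw => hlt.le.trans ?_⟩
  gcongr
  exact csInf_le (hB.mono (image_subset_range _ _)) (mem_image_of_mem h hw)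

theorem below_subset_closedBall (hlam : 0 < lam) (hyz : y ∈ below h lam z)
    (hy : ∀ w ∈ below h lam z, h y ≤ h w + δ) : below h lam y ⊆ closedBall y (δ / lam) :=
  fun w hw => by
    have := hy w (below_subset_below hlam.le hyz hw)
    rw [mem_closedBall, le_div_iff₀ hlam]
    simp only [below, mem_ofPred_eq] at hw
    linarith

end Ekeland

open Ekeland in
theorem LowerSemicontinuous.exists_ekeland {X : Type*} [MetricSpace X] [CompleteSpace X]
    {h : X → ℝ} (hh : LowerSemicontinuous h) (hB : BddBelow (range h)) {lam : ℝ}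
    (hlam : 0 < lam) (x : X) :
    ∃ xb, h xb + lam * dist xb x ≤ h x ∧ ∀ y, h xb ≤ h y + lam * dist y xb := by
  choose next hnext_mem hnext_le using fun (n : ℕ) z =>
    exists_mem_below_forall_le_add (lam := lam) hB z (pow_pos (one_half_pos (α := ℝ)) n)
  let u : ℕ → X := fun n => Nat.rec x (fun k z => next k z) n
  have hu : ∀ n, u (n + 1) ∈ below h lam (u n) := fun n => hnext_mem n (u n)
  -- `u (n + 1)` minimizes `h` on `below h lam (u n)` up to `2⁻ⁿ`, so the nested closed sets `s n`
  -- shrink to a single point, which is then minimal for Ekeland's order.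
  let s n := below h lam (u (n + 1))
  have hanti : Antitone s :=
    antitone_nat_of_succ_le fun n => below_subset_below hlam.le (hu (n + 1))
  have hball n : s n ⊆ closedBall (u (n + 1)) ((1 / 2) ^ n / lam) :=
    below_subset_closedBall hlam (hu n) (hnext_le n (u n))
  have hdiam : Tendsto (fun n => diam (s n)) atTop (𝓝 0) := by
    refine squeeze_zero (fun _ => diam_nonneg)
      (fun n => (diam_mono (hball n) isBounded_closedBall).trans (diam_closedBall (by positivity)))
      ?_
    have := tendsto_pow_atTop_nhds_zero_of_lt_one (by norm_num) (by norm_num : (1 / 2 : ℝ) < 1)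
    simpa using (this.div_const lam).const_mul 2
  obtain ⟨xb, hxb⟩ := nonempty_iInter_of_nonempty_biInter (fun n => isClosed_below hh _)
    (fun n => isBounded_closedBall.subset (hball n))
    (fun N => ⟨u (N + 1), mem_iInter₂.2 fun n hn => hanti hn (self_mem_below _)⟩) hdiam
  rw [mem_iInter] at hxb
  refine ⟨xb, below_subset_below hlam.le (hu 0) (hxb 0), fun y => ?_⟩
  by_contra! hy
  have hys n : y ∈ s n := below_subset_below hlam.le (hxb n) hy.le
  have : dist y xb = 0 := le_antisymm (ge_of_tendsto' hdiam fun n =>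
    dist_le_diam_of_mem (isBounded_closedBall.subset (hball n)) (hys n) (hxb n)) dist_nonneg
  rw [dist_eq_zero] at this
  simp [this] at hy

theorem convex_setOf_snd_add_mul_norm_fst_lt {E : Type*} [NormedAddCommGroup E]
    [NormedSpace ℝ E] {lam : ℝ} (hlam : 0 ≤ lam) :
    Convex ℝ {p : E × ℝ | p.2 + lam * ‖p.1‖ < 0} := by
  have := ((LinearMap.snd ℝ E ℝ).convexOn convex_univ).add
    (((convexOn_norm convex_univ).comp_linearMap (LinearMap.fst ℝ E ℝ)).smul hlam)
  simpa using this.convex_lt 0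

theorem Convex.exists_strongDual_norm_le_forall_le_snd {E : Type*} [NormedAddCommGroup E]
    [NormedSpace ℝ E] {S : Set (E × ℝ)} (hS : Convex ℝ S) (h0 : (0 : E × ℝ) ∈ S) {lam : ℝ}
    (hlam : 0 ≤ lam) (hcone : ∀ p ∈ S, -(lam * ‖p.1‖) ≤ p.2) :
    ∃ ξ : StrongDual ℝ E, ‖ξ‖ ≤ lam ∧ ∀ p ∈ S, ξ p.1 ≤ p.2 := by
  let C : Set (E × ℝ) := {p | p.2 + lam * ‖p.1‖ < 0}
  have hdisj : Disjoint C S := disjoint_left.2 fun p hpC hpS => by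
    linarith [hcone p hpS, show p.2 + lam * ‖p.1‖ < 0 from hpC]
  obtain ⟨Λ, u, hΛC, hΛS⟩ := geometric_hahn_banach_open (convex_setOf_snd_add_mul_norm_fst_lt hlam)
    (isOpen_lt (by fun_prop) continuous_const) hS hdisj
  set c := Λ (0, 1)
  have hΛ w t : Λ (w, t) = Λ (w, 0) + t * c := by
    rw [← smul_eq_mul, ← map_smul, ← map_add, Prod.smul_mk, Prod.mk_add_mk]; simp
  have hu : u ≤ 0 := by simpa using hΛS 0 h0
  have hC w δ (hδ : 0 < δ) : Λ (w, 0) < c * (lam * ‖w‖) + u + c * δ := by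
    have := hΛC (w, -(lam * ‖w‖) - δ) (show -(lam * ‖w‖) - δ + lam * ‖w‖ < 0 by linarith)
    rw [hΛ] at this
    linarith
  have hc : 0 < c := by
    have := hC 0 1 one_pos
    simp only [Prod.mk_zero_zero, map_zero, norm_zero, mul_zero, mul_one] at this
    linarith
  have hΛle w : Λ (w, 0) ≤ c * (lam * ‖w‖) := by
    refine le_of_forall_pos_lt_add fun ε hε => ?_
    have := hC w (ε / c) (by positivity)
    rw [mul_div_cancel₀ _ hc.ne'] at this
    linarith
  have hu0 : 0 ≤ u := le_of_forall_pos_lt_add fun ε hε => by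
    simpa [mul_div_cancel₀ _ hc.ne', Prod.mk_zero_zero] using hC 0 (ε / c) (by positivity)
  have hξ w : (-c⁻¹ • Λ ∘L ContinuousLinearMap.inl ℝ E ℝ) w = -(Λ (w, 0) / c) := by
    simp [div_eq_inv_mul]
  refine ⟨-c⁻¹ • Λ ∘L ContinuousLinearMap.inl ℝ E ℝ,
    ContinuousLinearMap.opNorm_le_bound _ hlam fun w => ?_, fun p hp => ?_⟩
  · have hneg := hΛle (-w)
    rw [← neg_zero, ← Prod.neg_mk, map_neg, norm_neg] at hneg
    rw [hξ, norm_neg, Real.norm_eq_abs, abs_div, abs_of_pos hc, div_le_iff₀ hc, abs_le]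
    constructor <;> linarith [hΛle w]
  · have := hΛS p hp
    rw [← Prod.mk.eta (p := p), hΛ] at this
    rw [hξ, neg_le, le_div_iff₀' hc]
    linarith

theorem EReal.coe_add_sub_le_of_le_sub_add {a : EReal} {s t e : ℝ}
    (h : (s : EReal) ≤ a - t + e) : ((s + t - e : ℝ) : EReal) ≤ a := by
  induction a using EReal.rec with
  | bot => simp at h
  | top => exact le_top
  | coe a => norm_cast at h ⊢; linarith

theorem LowerSemicontinuous.toReal {X : Type*} [TopologicalSpace X] {F : X → EReal}
    (hF : LowerSemicontinuous F) (hbot : ∀ y, F y ≠ ⊥) (htop : ∀ y, F y ≠ ⊤) :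
    LowerSemicontinuous fun y => (F y).toReal := fun y a ha => by
  have : (a : EReal) < F y := by rwa [← EReal.coe_toReal (htop y) (hbot y), EReal.coe_lt_coe_iff]
  filter_upwards [hF y a this] with z hz
  rw [← EReal.coe_toReal (htop z) (hbot z)] at hz
  exact_mod_cast hz

section Tilt

variable {X : Type*} [NormedAddCommGroup X] [NormedSpace ℝ X] {f : X → EReal}
  {xstar : StrongDual ℝ X} {c : ℝ} {y : X}

/-- `min (f - xstar) c`, as a real function (faithful only where `f ≠ ⊥`). -/
noncomputable def tiltTrunc (f : X → EReal) (xstar : StrongDual ℝ X) (c : ℝ) (y : X) : ℝ :=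
  (min (f y) ((c + xstar y : ℝ) : EReal)).toReal - xstar y

theorem coe_tiltTrunc_add (hy : f y ≠ ⊥) :
    ((tiltTrunc f xstar c y + xstar y : ℝ) : EReal) = min (f y) ((c + xstar y : ℝ) : EReal) := by
  rw [tiltTrunc, sub_add_cancel]
  exact EReal.coe_toReal (ne_top_of_le_ne_top (EReal.coe_ne_top _) (min_le_right _ _))
    (by simp [min_eq_bot, hy])

theorem tiltTrunc_le (hy : f y ≠ ⊥) : tiltTrunc f xstar c y ≤ c := by
  have := (coe_tiltTrunc_add (c := c) (xstar := xstar) hy).trans_le (min_le_right _ _)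
  norm_cast at this
  linarith

theorem coe_tiltTrunc_add_le (hy : f y ≠ ⊥) :
    ((tiltTrunc f xstar c y + xstar y : ℝ) : EReal) ≤ f y :=
  (coe_tiltTrunc_add hy).trans_le (min_le_left _ _)

theorem le_tiltTrunc {b : ℝ} (hy : f y ≠ ⊥) (hb : ((b + xstar y : ℝ) : EReal) ≤ f y) (hbc : b ≤ c) :
    b ≤ tiltTrunc f xstar c y := by
  have : ((b + xstar y : ℝ) : EReal) ≤ ((tiltTrunc f xstar c y + xstar y : ℝ) : EReal) := by
    rw [coe_tiltTrunc_add hy]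
    exact le_min hb (by norm_cast; linarith)
  norm_cast at this
  linarith

theorem eq_coe_tiltTrunc_add (hy : f y ≠ ⊥) (hlt : tiltTrunc f xstar c y < c) :
    f y = ((tiltTrunc f xstar c y + xstar y : ℝ) : EReal) := by
  rw [coe_tiltTrunc_add hy, eq_comm, min_eq_left_iff]
  by_contra! hgt
  have := coe_tiltTrunc_add (c := c) (xstar := xstar) hy
  rw [min_eq_right hgt.le] at this
  norm_cast at this
  linarith

theorem tiltTrunc_of_eq (hy : f y = ((c + xstar y : ℝ) : EReal)) : tiltTrunc f xstar c y = c := by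
  rw [tiltTrunc, hy, min_self, EReal.toReal_coe, add_sub_cancel_right]

theorem lowerSemicontinuous_tiltTrunc (hf : LowerSemicontinuous f) (hbot : ∀ y, f y ≠ ⊥) :
    LowerSemicontinuous (tiltTrunc f xstar c) := by
  have hmin : LowerSemicontinuous fun y => min (f y) ((c + xstar y : ℝ) : EReal) :=
    hf.inf (continuous_coe_real_ereal.comp
      (continuous_const.add xstar.continuous)).lowerSemicontinuous
  unfold tiltTrunc
  simp only [sub_eq_add_neg]
  exact (hmin.toReal (fun y => by simp [min_eq_bot, hbot y])
    (fun y => ne_top_of_le_ne_top (EReal.coe_ne_top _) (min_le_right _ _))).add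
    xstar.continuous.neg.lowerSemicontinuous

end Tilt

section BrondstedRockafellar

variable {X : Type*} [NormedAddCommGroup X] [NormedSpace ℝ X] {f : X → EReal}
  {xstar : StrongDual ℝ X} {lam : ℝ}

theorem exists_cone_minorant_of_epsSubgradient [CompleteSpace X] (hbot : ∀ y, f y ≠ ⊥)
    (hlsc : LowerSemicontinuous f) {x : X} {fx : ℝ} (hfx : f x = fx) {ε : ℝ} (hε : 0 ≤ ε)
    (hxstar : ∀ y : X, ((xstar y - xstar x : ℝ) : EReal) ≤ f y - f x + (ε : EReal))
    (hlam : 0 < lam) :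
    ∃ (xb : X) (r : ℝ), f xb = r ∧ lam * ‖xb - x‖ ≤ ε ∧
      -ε ≤ r - xstar (xb - x) - fx ∧ r - xstar (xb - x) - fx ≤ 0 ∧
      ∀ y, ((r + xstar (y - xb) - lam * ‖y - xb‖ : ℝ) : EReal) ≤ f y := by
  set c := fx - xstar x
  set h := tiltTrunc f xstar c
  have hlow y : c - ε ≤ h y := by
    refine le_tiltTrunc (hbot y) ?_ (by linarith)
    have := EReal.coe_add_sub_le_of_le_sub_add (hfx ▸ hxstar y)
    rwa [show xstar y - xstar x + fx - ε = c - ε + xstar y by ring] at this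
  have hx : h x = c := tiltTrunc_of_eq (by rw [hfx, sub_add_cancel])
  have hlsc_h : LowerSemicontinuous h := lowerSemicontinuous_tiltTrunc hlsc hbot
  obtain ⟨xb, hxb, hmin⟩ := hlsc_h.exists_ekeland ⟨c - ε, forall_mem_range.2 hlow⟩ hlam x
  rw [hx] at hxb
  have hfxb : f xb = ((h xb + xstar xb : ℝ) : EReal) := by
    rcases eq_or_ne xb x with rfl | hne
    · rw [hx, hfx, sub_add_cancel]
    · exact eq_coe_tiltTrunc_add (hbot xb) (by nlinarith [dist_pos.2 hne])
  have hval : h xb + xstar xb - xstar (xb - x) - fx = h xb - c := by rw [map_sub]; ring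
  refine ⟨xb, h xb + xstar xb, hfxb, ?_, ?_, ?_, fun y => ?_⟩
  · rw [← dist_eq_norm]; linarith [hlow xb]
  · rw [hval]; linarith [hlow xb]
  · rw [hval]; linarith [tiltTrunc_le (c := c) (xstar := xstar) (hbot xb)]
  · refine le_trans ?_ (coe_tiltTrunc_add_le (c := c) (xstar := xstar) (hbot y))
    rw [EReal.coe_le_coe_iff, map_sub, ← dist_eq_norm]
    linarith [hmin y]

theorem exists_subgradient_norm_sub_le_of_cone_minorant
    (hconv : Convex ℝ {p : X × ℝ | f p.1 ≤ (p.2 : EReal)}) {xb : X} {r : ℝ} (hr : f xb = r)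
    (hlam : 0 ≤ lam) (hcone : ∀ y, ((r + xstar (y - xb) - lam * ‖y - xb‖ : ℝ) : EReal) ≤ f y) :
    ∃ xbs : StrongDual ℝ X, ‖xbs - xstar‖ ≤ lam ∧
      ∀ y, ((xbs y - xbs xb : ℝ) : EReal) ≤ f y - f xb := by
  let L : X × ℝ →ₗ[ℝ] X × ℝ :=
    (LinearMap.fst ℝ X ℝ).prod ((xstar : X →ₗ[ℝ] ℝ) ∘ₗ LinearMap.fst ℝ X ℝ + LinearMap.snd ℝ X ℝ)
  have hmem w t : (w, t) ∈ L ⁻¹' ((fun q => (xb, r) + q) ⁻¹' {p | f p.1 ≤ (p.2 : EReal)}) ↔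
      f (xb + w) ≤ ((r + (xstar w + t) : ℝ) : EReal) := Iff.rfl
  obtain ⟨ξ, hξ, hξS⟩ := ((hconv.translate_preimage_right (xb, r)).linear_preimage L
    ).exists_strongDual_norm_le_forall_le_snd (by simp [hr]) hlam fun ⟨w, t⟩ hp => by
      have := (hcone (xb + w)).trans ((hmem w t).1 hp)
      rw [add_sub_cancel_left, EReal.coe_le_coe_iff] at this
      linarith
  refine ⟨xstar + ξ, by rwa [add_sub_cancel_left], fun y => ?_⟩
  rw [hr]
  induction hy : f y using EReal.rec with
  | bot => exact absurd (hy ▸ hcone y) (EReal.bot_lt_coe _).not_ge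
  | top => simp
  | coe s =>
    have := hξS (y - xb, s - r - xstar (y - xb))
      ((hmem _ _).2 (le_of_eq (by rw [add_sub_cancel, hy]; congr 1; ring)))
    simp only [add_apply, map_sub] at this ⊢
    norm_cast
    linarith

end BrondstedRockafellar

theorem brondsted_rockafellar_with_value_estimate_general
    {X : Type*} [NormedAddCommGroup X] [NormedSpace ℝ X] [CompleteSpace X]
    (f : X → EReal)
    (hne_bot : ∀ y : X, f y ≠ ⊥)
    (hconv : Convex ℝ {p : X × ℝ | f p.1 ≤ (p.2 : EReal)})
    (hlsc : LowerSemicontinuous f)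
    (x : X) (fx : ℝ) (hfx : f x = (fx : EReal))
    (ε : ℝ) (hε : 0 < ε)
    (xstar : StrongDual ℝ X)
    (hxstar : ∀ y : X, ((xstar y - xstar x : ℝ) : EReal) ≤ f y - f x + (ε : EReal)) :
    ∀ lam : ℝ, 0 < lam →
      ∃ (xb : X) (xbs : StrongDual ℝ X),
        ‖xb - x‖ ≤ ε / lam ∧ ‖xbs - xstar‖ ≤ lam ∧
        (∀ y : X, ((xbs y - xbs xb : ℝ) : EReal) ≤ f y - f xb) ∧
        ∃ r : ℝ, f xb = (r : EReal) ∧ |r - xbs (xb - x) - fx| ≤ 2 * ε := by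
  intro lam hlam
  obtain ⟨xb, r, hr, hdist, hval_ge, hval_le, hcone⟩ :=
    exists_cone_minorant_of_epsSubgradient hne_bot hlsc hfx hε.le hxstar hlam
  obtain ⟨xbs, hnorm, hsub⟩ :=
    exists_subgradient_norm_sub_le_of_cone_minorant hconv hr hlam.le hcone
  have hdiff : |(xbs - xstar) (xb - x)| ≤ ε := calc
    _ ≤ ‖xbs - xstar‖ * ‖xb - x‖ := (xbs - xstar).le_opNorm _
    _ ≤ lam * ‖xb - x‖ := by gcongr
    _ ≤ ε := hdist
  refine ⟨xb, xbs, by rwa [le_div_iff₀' hlam], hnorm, hsub, r, hr, ?_⟩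
  rw [sub_apply] at hdiff
  rw [abs_le] at hdiff ⊢
  constructor <;> linarith [hdiff.1, hdiff.2]

/-- Quantitative Brøndsted–Rockafellar theorem with function-value estimate: if `f` is proper
convex lsc on a Banach space, `x ∈ dom f`, `ε > 0` and `x* ∈ ∂_ε f(x)`, then for every `λ > 0`
there are `x̄` and `x̄* ∈ ∂f(x̄)` with `‖x̄ − x‖ ≤ ε/λ`, `‖x̄* − x*‖ ≤ λ` and
`|f(x̄) − ⟨x̄*, x̄ − x⟩ − f(x)| ≤ 2ε`. -/
theorem brondsted_rockafellar_with_value_estimate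
    {X : Type*} [NormedAddCommGroup X] [NormedSpace ℝ X] [CompleteSpace X]
    (f : X → EReal)
    (hne_bot : ∀ y : X, f y ≠ ⊥) (hne_top : ∃ y : X, f y ≠ ⊤)
    (hconv : Convex ℝ {p : X × ℝ | f p.1 ≤ (p.2 : EReal)})
    (hlsc : LowerSemicontinuous f)
    (x : X) (fx : ℝ) (hfx : f x = (fx : EReal))
    (ε : ℝ) (hε : 0 < ε)
    (xstar : StrongDual ℝ X)
    (hxstar : ∀ y : X, ((xstar y - xstar x : ℝ) : EReal) ≤ f y - f x + (ε : EReal)) :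
    ∀ lam : ℝ, 0 < lam →
      ∃ (xb : X) (xbs : StrongDual ℝ X),
        ‖xb - x‖ ≤ ε / lam ∧ ‖xbs - xstar‖ ≤ lam ∧
        (∀ y : X, ((xbs y - xbs xb : ℝ) : EReal) ≤ f y - f xb) ∧
        ∃ r : ℝ, f xb = (r : EReal) ∧ |r - xbs (xb - x) - fx| ≤ 2 * ε :=
  brondsted_rockafellar_with_value_estimate_general f hne_bot hconv hlsc x fx hfx ε hε xstar hxstar
end
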